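/- arXiv:2112.03771 — 11 statements merged into one kernel-verified Lean document; each statement's English description precedes it below -/
import Mathlib

section
/- Let D_∞ = ⟨r, t | r² = t² = e⟩ be the infinite dihedral group and x, y, x', y' ∈ ℂ×. Define ϱ_{x,y} on ℂβ_r ⊕ ℂβ_t by r·β_r = -β_r, r·β_t = β_t + xβ_r, t·β_t = -β_t, t·β_r = β_r + yβ_t. Then ϱ_{x,y} ≅ ϱ_{x',y'} as representations of D_∞ if and only if xy = x'y'. -/
/-!
Isomorphic representations have the same character, and with respect to the basis `β_r, β_t`
the matrix of `ϱ_{x,y}(rt)` is `!![x * y - 1, -x; y, -1]`, of trace `x * y - 2`; so `x * y` is an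
isomorphism invariant. Conversely, if `x * y = x' * y'` then `diag(x', x)` intertwines
`ϱ_{x,y}` and `ϱ_{x',y'}` on the generators `r = sr 0` and `t = sr 1`, which generate `D_∞`.
-/

open DihedralGroup

theorem DihedralGroup.closure_sr_zero_sr_one (n : ℕ) :
    Subgroup.closure {sr 0, sr 1} = (⊤ : Subgroup (DihedralGroup n)) := by
  set H := Subgroup.closure {(sr 0 : DihedralGroup n), sr 1}
  have hsr0 : sr 0 ∈ H := Subgroup.subset_closure (by simp)
  have hsr1 : sr 1 ∈ H := Subgroup.subset_closure (by simp)
  have hr1 : r 1 ∈ H := by simpa [sr_mul_sr] using H.mul_mem hsr0 hsr1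
  have hr : ∀ i, r i ∈ H := fun i => by simpa [r_one_zpow] using H.zpow_mem hr1 (i.cast : ℤ)
  refine (Subgroup.eq_top_iff' H).mpr fun g => ?_
  rcases g with i | i
  · exact hr i
  · simpa [sr_mul_r] using H.mul_mem hsr0 (hr i)

namespace Representation

section Group

variable {k G V W : Type*} [CommSemiring k] [Group G] [AddCommMonoid V] [AddCommMonoid W]
  [Module k V] [Module k W]

theorem isIntertwiningMap_of_closure_eq_top {ρ : Representation k G V}
    {σ : Representation k G W} {f : V →ₗ[k] W} {s : Set G} (hs : Subgroup.closure s = ⊤)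
    (hf : ∀ g ∈ s, ∀ v, f (ρ g v) = σ g (f v)) : IsIntertwiningMap ρ σ f := by
  refine ⟨fun g => ?_⟩
  have hg : g ∈ Subgroup.closure s := hs ▸ Subgroup.mem_top g
  induction hg using Subgroup.closure_induction with
  | mem g hg => exact hf g hg
  | one => simp
  | mul g h _ _ hg hh => intro v; simp [hg, hh]
  | inv g _ hg =>
    intro v
    rw [← σ.inv_self_apply g (f (ρ g⁻¹ v)), ← hg, self_inv_apply]

end Group

variable {k G V W : Type*} [CommRing k] [Monoid G] [AddCommGroup V] [AddCommGroup W]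
  [Module k V] [Module k W]

theorem trace_eq_of_isIntertwiningMap {ρ : Representation k G V} {σ : Representation k G W}
    (e : V ≃ₗ[k] W) (he : IsIntertwiningMap ρ σ e) (g : G) :
    LinearMap.trace k W (σ g) = LinearMap.trace k V (ρ g) := by
  have hconj : e.conj (ρ g) = σ g := by
    ext w
    simpa [LinearEquiv.conj_apply] using he.isIntertwining g (e.symm w)
  rw [← hconj, LinearMap.trace_conj']

end Representation

theorem LinearMap.trace_fin_two {R : Type*} [CommSemiring R] (f : Module.End R (Fin 2 → R)) :
    trace R _ f = f (Pi.single 0 1) 0 + f (Pi.single 1 1) 1 := by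
  rw [← Matrix.toLin'_toMatrix' f, Matrix.trace_toLin'_eq, Matrix.trace_fin_two,
    Matrix.toLin'_toMatrix', toMatrix'_apply, toMatrix'_apply]

/-- `ϱ_{x,y}(r)` is `IsVarrhoReflection _ 0 1 x` and `ϱ_{x,y}(t)` is `IsVarrhoReflection _ 1 0 y`. -/
def IsVarrhoReflection {R : Type*} [Ring R] (S : Module.End R (Fin 2 → R)) (i j : Fin 2)
    (x : R) : Prop :=
  S (Pi.single i 1) = -Pi.single i 1 ∧ S (Pi.single j 1) = Pi.single j 1 + x • Pi.single i 1

namespace IsVarrhoReflection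

variable {R : Type*} [CommRing R] {S S' T : Module.End R (Fin 2 → R)} {x x' y : R}

theorem trace_mul (hS : IsVarrhoReflection S 0 1 x) (hT : IsVarrhoReflection T 1 0 y) :
    LinearMap.trace R _ (S * T) = x * y - 2 := by
  rw [LinearMap.trace_fin_two, Module.End.mul_apply, Module.End.mul_apply, hT.1, hT.2, map_neg,
    map_add, map_smul, hS.1, hS.2]
  simp only [smul_add, Pi.add_apply, Pi.neg_apply, Pi.smul_apply, Pi.single_eq_same,
    Pi.single_eq_of_ne zero_ne_one, Pi.single_eq_of_ne one_ne_zero, smul_eq_mul]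
  ring

theorem comp_eq_comp_of_apply_single {i j : Fin 2} (hij : i ≠ j)
    (hS : IsVarrhoReflection S i j x) (hS' : IsVarrhoReflection S' i j x')
    {E : Module.End R (Fin 2 → R)} {d : Fin 2 → R}
    (hE : ∀ k, E (Pi.single k 1) = d k • Pi.single k 1) (hd : x * d i = d j * x') :
    E ∘ₗ S = S' ∘ₗ E := by
  refine (Pi.basisFun R (Fin 2)).ext fun k => ?_
  obtain rfl | rfl : k = i ∨ k = j := by omega
  · simp [hS.1, hS'.1, hE]
  · simp [hS.2, hS'.2, hE, smul_smul, hd]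

end IsVarrhoReflection

section Diagonal

variable {K ι : Type*} [Field K]

def diagonalEquiv (d : ι → K) (hd : ∀ i, d i ≠ 0) : (ι → K) ≃ₗ[K] (ι → K) :=
  LinearEquiv.piCongrRight fun i => LinearEquiv.smulOfNeZero K K (d i) (hd i)

theorem diagonalEquiv_single [DecidableEq ι] (d : ι → K) (hd : ∀ i, d i ≠ 0) (i : ι) :
    diagonalEquiv d hd (Pi.single i 1) = d i • Pi.single i 1 := by
  ext k
  by_cases h : k = i <;> simp [diagonalEquiv, h]

end Diagonal

theorem varrho_iso_iff_general (x y x' y' : ℂ) (hx : x ≠ 0) (hx' : x' ≠ 0)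
    (βr βt : Fin 2 → ℂ) (hβr : βr = Pi.single 0 1) (hβt : βt = Pi.single 1 1)
    (ρ ρ' : Representation ℂ (DihedralGroup 0) (Fin 2 → ℂ))
    (hrr : ρ (sr 0) βr = -βr) (hrt : ρ (sr 0) βt = βt + x • βr)
    (htt : ρ (sr 1) βt = -βt) (htr : ρ (sr 1) βr = βr + y • βt)
    (hrr' : ρ' (sr 0) βr = -βr) (hrt' : ρ' (sr 0) βt = βt + x' • βr)
    (htt' : ρ' (sr 1) βt = -βt) (htr' : ρ' (sr 1) βr = βr + y' • βt) :
    (∃ e : (Fin 2 → ℂ) ≃ₗ[ℂ] (Fin 2 → ℂ), ∀ (g : DihedralGroup 0) (v : Fin 2 → ℂ),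
      e (ρ g v) = ρ' g (e v)) ↔ x * y = x' * y' := by
  subst hβr hβt
  have hr : IsVarrhoReflection (ρ (sr 0)) 0 1 x := ⟨hrr, hrt⟩
  have ht : IsVarrhoReflection (ρ (sr 1)) 1 0 y := ⟨htt, htr⟩
  have hr' : IsVarrhoReflection (ρ' (sr 0)) 0 1 x' := ⟨hrr', hrt'⟩
  have ht' : IsVarrhoReflection (ρ' (sr 1)) 1 0 y' := ⟨htt', htr'⟩
  constructor
  · rintro ⟨e, he⟩
    have htrace := Representation.trace_eq_of_isIntertwiningMap e ⟨he⟩ (sr 0 * sr 1)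
    rw [map_mul ρ, map_mul ρ', hr.trace_mul ht, hr'.trace_mul ht'] at htrace
    linear_combination -htrace
  · intro hxy
    have hd : ∀ i, ![x', x] i ≠ 0 := by simp [Fin.forall_fin_two, hx, hx']
    set e := diagonalEquiv ![x', x] hd
    have he : ∀ k, e.toLinearMap (Pi.single k 1) = ![x', x] k • Pi.single k 1 :=
      diagonalEquiv_single _ hd
    refine ⟨e, (Representation.isIntertwiningMap_of_closure_eq_top
      (closure_sr_zero_sr_one 0) ?_).isIntertwining⟩
    simp only [Set.mem_insert_iff, Set.mem_singleton_iff, forall_eq_or_imp, forall_eq]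
    exact ⟨LinearMap.congr_fun (hr.comp_eq_comp_of_apply_single (by decide) hr' he rfl),
      LinearMap.congr_fun
        (ht.comp_eq_comp_of_apply_single (by decide) ht' he ((mul_comm y x).trans hxy))⟩

/-- For `x, y, x', y' ∈ ℂ×`, the representations `ϱ_{x,y}` and `ϱ_{x',y'}` of the
infinite dihedral group `D_∞ = DihedralGroup 0` are isomorphic iff `xy = x'y'`. -/
theorem varrho_iso_iff (x y x' y' : ℂ) (hx : x ≠ 0) (hy : y ≠ 0) (hx' : x' ≠ 0) (hy' : y' ≠ 0)
    (βr βt : Fin 2 → ℂ) (hβr : βr = Pi.single 0 1) (hβt : βt = Pi.single 1 1)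
    (ρ ρ' : Representation ℂ (DihedralGroup 0) (Fin 2 → ℂ))
    (hrr : ρ (sr 0) βr = -βr) (hrt : ρ (sr 0) βt = βt + x • βr)
    (htt : ρ (sr 1) βt = -βt) (htr : ρ (sr 1) βr = βr + y • βt)
    (hrr' : ρ' (sr 0) βr = -βr) (hrt' : ρ' (sr 0) βt = βt + x' • βr)
    (htt' : ρ' (sr 1) βt = -βt) (htr' : ρ' (sr 1) βr = βr + y' • βt) :
    (∃ e : (Fin 2 → ℂ) ≃ₗ[ℂ] (Fin 2 → ℂ), ∀ (g : DihedralGroup 0) (v : Fin 2 → ℂ),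
      e (ρ g v) = ρ' g (e v)) ↔ x * y = x' * y' :=
  varrho_iso_iff_general x y x' y' hx hx' βr βt hβr hβt ρ ρ' hrr hrt htt htr hrr' hrt' htt' htr'
end

section
/- Let D_∞ = ⟨r, t | r² = t² = e⟩ and x, y ∈ ℂ×. The representation ϱ_{x,y} on ℂβ_r ⊕ ℂβ_t defined by r·β_r = -β_r, r·β_t = β_t + xβ_r, t·β_t = -β_t, t·β_r = β_r + yβ_t is irreducible if and only if xy ≠ 4. -/
/-!
`D_∞` is generated as a monoid by the involutions `r = sr 0` and `t = sr 1`, so a subspace is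
invariant as soon as `ϱ(r)` and `ϱ(t)` preserve it. For `v = a β_r + c β_t` one has
`ϱ(r) v - v = (x c - 2 a) β_r` and `ϱ(t) v - v = (y a - 2 c) β_t`. Hence a nonzero invariant
subspace contains `β_r` or `β_t`, and then (as `x, y ≠ 0`) both, unless both coefficients
vanish, which for `v ≠ 0` forces the determinant `x y - 4` of this linear system to vanish.
Conversely, if `x y = 4` then `x β_r + 2 β_t` is fixed by `ϱ(r)` and `ϱ(t)` and spans an
invariant line.
-/

open DihedralGroup

namespace DihedralGroup

variable {n : ℕ}

theorem closure_sr_zero_sr_one_s5 :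
    Subgroup.closure {sr 0, sr 1} = (⊤ : Subgroup (DihedralGroup n)) := by
  set H := Subgroup.closure ({sr 0, sr 1} : Set (DihedralGroup n))
  have hsr0 : sr 0 ∈ H := Subgroup.subset_closure (by simp)
  have hr : ∀ i, r i ∈ H := by
    intro i
    obtain ⟨k, rfl⟩ := ZMod.intCast_surjective i
    have hr1 : r 1 ∈ H := by
      simpa [sr_mul_sr] using H.mul_mem hsr0 (Subgroup.subset_closure (by simp) : sr 1 ∈ H)
    simpa only [r_one_zpow] using H.zpow_mem hr1 k
  refine eq_top_iff.2 fun g _ => ?_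
  rcases g with i | i
  · exact hr i
  · simpa [r_mul_sr] using H.mul_mem (hr (-i)) hsr0

theorem mclosure_sr_zero_sr_one :
    Submonoid.closure {sr 0, sr 1} = (⊤ : Submonoid (DihedralGroup n)) := by
  have hinv : ({sr 0, sr 1} : Set (DihedralGroup n))⁻¹ = {sr 0, sr 1} := by
    simp [Set.inv_insert, inv_sr]
  have := Subgroup.closure_toSubmonoid ({sr 0, sr 1} : Set (DihedralGroup n))
  rwa [hinv, Set.union_self, closure_sr_zero_sr_one_s5, Subgroup.top_toSubmonoid, eq_comm] at this

end DihedralGroup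

theorem Representation.map_mem_of_mclosure_eq_top {k G V : Type*} [CommSemiring k] [Monoid G]
    [AddCommMonoid V] [Module k V] (ρ : Representation k G V) {s : Set G}
    (hs : Submonoid.closure s = ⊤) {p : Submodule k V}
    (hp : ∀ g ∈ s, ∀ v ∈ p, ρ g v ∈ p) (g : G) : ∀ v ∈ p, ρ g v ∈ p :=
  Submonoid.closure_induction (motive := fun g _ => ∀ v ∈ p, ρ g v ∈ p) hp (by simp)
    (fun a b _ _ ha hb v hv => by simpa using ha _ (hb v hv)) (hs ▸ Submonoid.mem_top g)

/-- `A` and `B` act on the basis `b` as `ϱ_{x,y}(r)` and `ϱ_{x,y}(t)` act on `(β_r, β_t)`. -/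
structure IsVarrhoAction {K V : Type*} [Field K] [AddCommGroup V] [Module K V]
    (b : Module.Basis (Fin 2) K V) (x y : K) (A B : Module.End K V) : Prop where
  A_b0 : A (b 0) = -b 0
  A_b1 : A (b 1) = b 1 + x • b 0
  B_b1 : B (b 1) = -b 1
  B_b0 : B (b 0) = b 0 + y • b 1

namespace IsVarrhoAction

variable {K V : Type*} [Field K] [AddCommGroup V] [Module K V] {b : Module.Basis (Fin 2) K V}
  {x y : K} {A B : Module.End K V}

theorem A_sub_self (h : IsVarrhoAction b x y A B) (v : V) :
    A v - v = (x * b.repr v 1 - 2 * b.repr v 0) • b 0 := by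
  conv_lhs => rw [← b.sum_repr v, Fin.sum_univ_two]
  simp only [map_add, map_smul, h.A_b0, h.A_b1]
  module

theorem B_sub_self (h : IsVarrhoAction b x y A B) (v : V) :
    B v - v = (y * b.repr v 0 - 2 * b.repr v 1) • b 1 := by
  conv_lhs => rw [← b.sum_repr v, Fin.sum_univ_two]
  simp only [map_add, map_smul, h.B_b0, h.B_b1]
  module

theorem exists_fixed_ne_zero (h : IsVarrhoAction b x y A B) (hx : x ≠ 0)
    (hxy : x * y = 4) : ∃ v ≠ 0, A v = v ∧ B v = v := by
  refine ⟨x • b 0 + (2 : K) • b 1, fun hv => hx ?_, ?_, ?_⟩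
  · simpa using congr_arg (b.repr · 0) hv
  · rw [← sub_eq_zero, h.A_sub_self]; simp [mul_comm]
  · rw [← sub_eq_zero, h.B_sub_self]
    simp [show y * x - 2 * 2 = 0 by linear_combination hxy]

theorem eq_top_of_b0_mem (h : IsVarrhoAction b x y A B) (hy : y ≠ 0) {p : Submodule K V}
    (hB : ∀ v ∈ p, B v ∈ p) (h0 : b 0 ∈ p) : p = ⊤ := by
  have h1 : b 1 ∈ p := by
    rw [← p.smul_mem_iff hy]
    simpa [h.B_b0] using sub_mem (hB _ h0) h0
  rw [eq_top_iff, ← b.span_eq, Submodule.span_le]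
  rintro _ ⟨i, rfl⟩
  fin_cases i <;> assumption

theorem eq_top_of_b1_mem (h : IsVarrhoAction b x y A B) (hx : x ≠ 0) (hy : y ≠ 0)
    {p : Submodule K V} (hA : ∀ v ∈ p, A v ∈ p) (hB : ∀ v ∈ p, B v ∈ p)
    (h1 : b 1 ∈ p) : p = ⊤ := by
  refine h.eq_top_of_b0_mem hy hB ((p.smul_mem_iff hx).1 ?_)
  simpa [h.A_b1] using sub_mem (hA _ h1) h1

theorem eq_bot_or_eq_top (h : IsVarrhoAction b x y A B) (hx : x ≠ 0) (hy : y ≠ 0)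
    (hxy : x * y ≠ 4) {p : Submodule K V} (hA : ∀ v ∈ p, A v ∈ p)
    (hB : ∀ v ∈ p, B v ∈ p) : p = ⊥ ∨ p = ⊤ := by
  refine or_iff_not_imp_left.2 fun hp => ?_
  obtain ⟨v, hv, hv0⟩ := p.exists_mem_ne_zero_of_ne_bot hp
  set c := b.repr v
  by_cases hc0 : x * c 1 - 2 * c 0 = 0
  · by_cases hc1 : y * c 0 - 2 * c 1 = 0
    · have hdet : x * y - 4 ≠ 0 := sub_ne_zero.2 hxy
      have : c = 0 := by
        ext i; fin_cases i
        · have : c 0 * (x * y - 4) = 0 := by linear_combination x * hc1 + 2 * hc0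
          simpa [hdet] using this
        · have : c 1 * (x * y - 4) = 0 := by linear_combination y * hc0 + 2 * hc1
          simpa [hdet] using this
      exact absurd (b.repr.map_eq_zero_iff.1 this) hv0
    · refine h.eq_top_of_b1_mem hx hy hA hB ?_
      rw [← p.smul_mem_iff hc1, ← h.B_sub_self]
      exact sub_mem (hB v hv) hv
  · refine h.eq_top_of_b0_mem hy hB ?_
    rw [← p.smul_mem_iff hc0, ← h.A_sub_self]
    exact sub_mem (hA v hv) hv

end IsVarrhoAction

theorem Submodule.span_singleton_ne_top {K V : Type*} [DivisionRing K] [AddCommGroup V]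
    [Module K V] (h : 1 < Module.finrank K V) (v : V) : K ∙ v ≠ ⊤ := fun htop => by
  have := finrank_span_le_card (R := K) ({v} : Set V)
  rw [htop, finrank_top] at this
  simp only [Set.toFinset_singleton, Finset.card_singleton] at this
  omega

/-- For `x, y ∈ ℂ×`, the representation `ϱ_{x,y}` of the infinite dihedral group
`D_∞ = DihedralGroup 0` is irreducible iff `xy ≠ 4`. -/
theorem varrho_irreducible_iff (x y : ℂ) (hx : x ≠ 0) (hy : y ≠ 0)
    (βr βt : Fin 2 → ℂ) (hβr : βr = Pi.single 0 1) (hβt : βt = Pi.single 1 1)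
    (ρ : Representation ℂ (DihedralGroup 0) (Fin 2 → ℂ))
    (hrr : ρ (sr 0) βr = -βr) (hrt : ρ (sr 0) βt = βt + x • βr)
    (htt : ρ (sr 1) βt = -βt) (htr : ρ (sr 1) βr = βr + y • βt) :
    (∀ p : Submodule ℂ (Fin 2 → ℂ), (∀ (g : DihedralGroup 0), ∀ v ∈ p, ρ g v ∈ p) →
      p = ⊥ ∨ p = ⊤) ↔ x * y ≠ 4 := by
  subst hβr hβt
  have h : IsVarrhoAction (Pi.basisFun ℂ (Fin 2)) x y (ρ (sr 0)) (ρ (sr 1)) := by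
    constructor <;> simpa only [Pi.basisFun_apply]
  constructor
  · intro hirr hxy
    obtain ⟨v, hv0, hAv, hBv⟩ := h.exists_fixed_ne_zero hx hxy
    have hinv : ∀ g, ∀ w ∈ ℂ ∙ v, ρ g w ∈ ℂ ∙ v := by
      refine ρ.map_mem_of_mclosure_eq_top mclosure_sr_zero_sr_one ?_
      rintro g (rfl | rfl) w hw <;> obtain ⟨c, rfl⟩ := Submodule.mem_span_singleton.1 hw <;>
        simpa [hAv, hBv] using hw
    rcases hirr _ hinv with hbot | htop
    · exact hv0 (by simpa using hbot)
    · exact Submodule.span_singleton_ne_top (by simp) v htop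
  · exact fun hxy p hp => h.eq_bot_or_eq_top hx hy hxy (hp _) (hp _)
end

section
/- Let (W,S) be a Coxeter system of finite rank with m_{rt} < ∞ for all r,t ∈ S. Given data k_{rt} ∈ ℕ with 1 ≤ k_{rt} = k_{tr} ≤ m_{rt}/2 and a_r^t ∈ ℂ× for all distinct r, t ∈ S, the formulas r·α_r = -α_r and r·α_t = α_t + 2(a_r^t/a_t^r)cos(k_{rt}π/m_{rt})α_r for t ≠ r define a representation of W on V = ⊕_{s∈S} ℂα_s, and for each s ∈ S the fixed space of s in V has codimension 1. -/
open Finset in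
noncomputable def irSigma {S : Type*} [Fintype S] [DecidableEq S]
    (c : S → S → ℂ) (r : S) : (S → ℂ) →ₗ[ℂ] (S → ℂ) where
  toFun v s := if s = r then (∑ u, c r u * v u) - v r else v s
  map_add' v w := by
    funext s
    by_cases h : s = r
    · simp only [h, if_pos, Pi.add_apply, mul_add, Finset.sum_add_distrib]; ring
    · simp [h]
  map_smul' z v := by
    funext s
    by_cases h : s = r
    · simp only [h, if_pos, Pi.smul_apply, smul_eq_mul, RingHom.id_apply, Finset.mul_sum]
      have h2 : ∑ x, c r x * (z * v x) = z * ∑ x, c r x * v x := by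
        rw [Finset.mul_sum]
        exact Finset.sum_congr rfl fun u _ => by ring
      rw [h2]
      ring
    · simp [h]

theorem irSigma_apply {S : Type*} [Fintype S] [DecidableEq S]
    (c : S → S → ℂ) (r : S) (v : S → ℂ) (s : S) :
    irSigma c r v s = if s = r then (∑ u, c r u * v u) - v r else v s := rfl

theorem irSigma_apply_ne {S : Type*} [Fintype S] [DecidableEq S]
    (c : S → S → ℂ) (r : S) (v : S → ℂ) {s : S} (h : s ≠ r) :
    irSigma c r v s = v s := by simp [irSigma_apply, h]

theorem irSigma_single_self {S : Type*} [Fintype S] [DecidableEq S]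
    (c : S → S → ℂ) (hc : ∀ r, c r r = 0) (r : S) :
    irSigma c r (Pi.single r 1) = -Pi.single r 1 := by
  funext s
  by_cases h : s = r <;>
    simp [irSigma_apply, h, Pi.single_apply, hc]

theorem irSigma_single {S : Type*} [Fintype S] [DecidableEq S]
    (c : S → S → ℂ) (r : S) {t : S} (h : t ≠ r) :
    irSigma c r (Pi.single t 1) =
      (Pi.single t 1 : S → ℂ) + c r t • (Pi.single r 1 : S → ℂ) := by
  funext s
  by_cases hs : s = r <;>
    simp [irSigma_apply, hs, Pi.single_apply, h, Ne.symm h]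

theorem irSigma_sq {S : Type*} [Fintype S] [DecidableEq S]
    (c : S → S → ℂ) (hc : ∀ r, c r r = 0) (r : S) (v : S → ℂ) :
    irSigma c r (irSigma c r v) = v := by
  funext s
  by_cases h : s = r
  · subst h
    rw [irSigma_apply, if_pos rfl]
    have h1 : ∑ u, c s u * irSigma c s v u = ∑ u, c s u * v u :=
      Finset.sum_congr rfl fun u _ => by
        by_cases hu : u = s
        · subst hu; simp [hc]
        · rw [irSigma_apply_ne c s v hu]
    rw [h1, irSigma_apply, if_pos rfl]
    ring
  · rw [irSigma_apply_ne c r _ h, irSigma_apply_ne c r _ h]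

section pair

variable {S : Type*} [Fintype S] [DecidableEq S] (c : S → S → ℂ) {r t : S}

theorem support_two (hrt : r ≠ t) {w : S → ℂ} (hw : ∀ s, s ≠ r → s ≠ t → w s = 0) :
    w = w r • (Pi.single r 1 : S → ℂ) + w t • (Pi.single t 1 : S → ℂ) := by
  funext s
  by_cases hs : s = r
  · subst hs; simp [Pi.single_apply, hrt]
  · by_cases hs' : s = t
    · subst hs'; simp [Pi.single_apply, Ne.symm hrt, hs]
    · simp [Pi.single_apply, hs, hs', hw s hs hs']

theorem irG_apply_ne (v : S → ℂ) {s : S} (hs : s ≠ r) (hs' : s ≠ t) :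
    (irSigma c r * irSigma c t) v s = v s := by
  rw [Module.End.mul_apply, irSigma_apply_ne c r _ hs, irSigma_apply_ne c t _ hs']

theorem irG_er (hc : ∀ u, c u u = 0) (hrt : r ≠ t) :
    (irSigma c r * irSigma c t) (Pi.single r 1) =
      (c t r * c r t - 1) • (Pi.single r 1 : S → ℂ) + c t r • (Pi.single t 1 : S → ℂ) := by
  rw [Module.End.mul_apply, irSigma_single c t hrt, map_add, map_smul,
    irSigma_single_self c hc r, irSigma_single c r (Ne.symm hrt)]
  module

theorem irG_et (hc : ∀ u, c u u = 0) (hrt : r ≠ t) :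
    (irSigma c r * irSigma c t) (Pi.single t 1) =
      -(c r t • (Pi.single r 1 : S → ℂ)) - (Pi.single t 1 : S → ℂ) := by
  rw [Module.End.mul_apply, irSigma_single_self c hc t, map_neg,
    irSigma_single c r (Ne.symm hrt)]
  module

theorem irG_quad (hc : ∀ u, c u u = 0) (hrt : r ≠ t) {w : S → ℂ}
    (hw : ∀ s, s ≠ r → s ≠ t → w s = 0) :
    (irSigma c r * irSigma c t) ((irSigma c r * irSigma c t) w)
      = (c r t * c t r - 2) • ((irSigma c r * irSigma c t) w) - w := by
  rw [support_two hrt hw]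
  simp only [map_add, map_smul, map_sub, map_neg, irG_er c hc hrt, irG_et c hc hrt]
  module

end pair

open Polynomial in
theorem pow_eq_one_of_cubic {A : Type*} [Ring A] [Algebra ℂ A] (g : A) (ω : ℂ) (m : ℕ)
    (hm : m ≠ 0) (hω : ω ^ m = 1) (h1 : ω ≠ 1) (h2 : ω ≠ ω⁻¹)
    (hg : (g - algebraMap ℂ A ω) * (g - algebraMap ℂ A ω⁻¹) * (g - 1) = 0) :
    g ^ m = 1 := by
  have hω0 : ω ≠ 0 := by rintro rfl; rw [zero_pow hm] at hω; exact one_ne_zero hω.symm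
  have hωinv : (ω⁻¹) ^ m = 1 := by rw [inv_pow, hω, inv_one]
  have hinv1 : ω⁻¹ ≠ 1 := by
    intro h; exact h1 (by rw [← inv_inv ω, h, inv_one])
  -- coprimality of distinct linear factors
  have cop : ∀ x y : ℂ, x ≠ y → IsCoprime (X - C x) (X - C y) := by
    intro x y hxy
    refine ⟨C (y - x)⁻¹, -C (y - x)⁻¹, ?_⟩
    have h0 : (y - x) ≠ 0 := sub_ne_zero.mpr (Ne.symm hxy)
    have hcalc : C (y - x)⁻¹ * (X - C x) + -C (y - x)⁻¹ * (X - C y)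
        = C ((y - x)⁻¹ * (y - x)) := by
      simp only [map_mul, map_sub]; ring
    rw [hcalc, inv_mul_cancel₀ h0, map_one]
  have dvd1 : (X - C ω) ∣ (X ^ m - 1 : ℂ[X]) := by
    rw [dvd_iff_isRoot]; simp [IsRoot, hω]
  have dvd2 : (X - C ω⁻¹) ∣ (X ^ m - 1 : ℂ[X]) := by
    rw [dvd_iff_isRoot]; simp [IsRoot, hωinv]
  have dvd3 : (X - C 1) ∣ (X ^ m - 1 : ℂ[X]) := by
    rw [dvd_iff_isRoot]; simp [IsRoot]
  have cop12 : IsCoprime (X - C ω) (X - C ω⁻¹) := cop _ _ h2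
  have cop13 : IsCoprime ((X - C ω) * (X - C ω⁻¹)) (X - C 1) :=
    (cop _ _ h1).mul_left (cop _ _ hinv1)
  obtain ⟨q, hq⟩ : ((X - C ω) * (X - C ω⁻¹) * (X - C 1)) ∣ (X ^ m - 1 : ℂ[X]) :=
    cop13.mul_dvd (cop12.mul_dvd dvd1 dvd2) dvd3
  have := congrArg (aeval g) hq
  simp only [map_mul, map_sub, map_pow, map_one, aeval_X, aeval_C] at this
  rw [hg, zero_mul] at this
  exact sub_eq_zero.mp this


theorem irG_pow_eq_one {S : Type*} [Fintype S] [DecidableEq S]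
    (c : S → S → ℂ) (hc : ∀ u, c u u = 0) {r t : S} (hrt : r ≠ t)
    (m k : ℕ) (hm : m ≠ 0) (hk1 : 1 ≤ k) (hk2 : 2 * k ≤ m)
    (d d' : ℂ) (hdd : d * d' = 4)
    (hcrt : c r t = d * ((Real.cos (k * Real.pi / m) : ℝ) : ℂ))
    (hctr : c t r = d' * ((Real.cos (k * Real.pi / m) : ℝ) : ℂ)) :
    (irSigma c r * irSigma c t) ^ m = 1 := by
  set θ : ℝ := k * Real.pi / m with hθdef
  set g : Module.End ℂ (S → ℂ) := irSigma c r * irSigma c t with hgdef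
  clear_value g
  have hmR : (m : ℝ) ≠ 0 := Nat.cast_ne_zero.mpr hm
  have hβ : c r t * c t r = 4 * ((Real.cos θ : ℝ) : ℂ) ^ 2 := by
    rw [hcrt, hctr]
    calc d * ((Real.cos θ : ℝ) : ℂ) * (d' * ((Real.cos θ : ℝ) : ℂ))
        = (d * d') * ((Real.cos θ : ℝ) : ℂ) ^ 2 := by ring
      _ = 4 * ((Real.cos θ : ℝ) : ℂ) ^ 2 := by rw [hdd]
  have hw_supp : ∀ v : S → ℂ, ∀ s, s ≠ r → s ≠ t → (g v - v) s = 0 := by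
    intro v s hs hs'
    rw [Pi.sub_apply, hgdef, irG_apply_ne c v hs hs', sub_self]
  by_cases hcase : 2 * k = m
  · -- θ = π/2, cos θ = 0
    have hk0 : (k : ℝ) ≠ 0 := Nat.cast_ne_zero.mpr (by omega)
    have hθ : θ = Real.pi / 2 := by
      rw [hθdef, ← hcase]
      push_cast
      field_simp
    have hcos : Real.cos θ = 0 := by rw [hθ, Real.cos_pi_div_two]
    have hb : c r t = 0 := by rw [hcrt, hcos]; simp
    have hb' : c t r = 0 := by rw [hctr, hcos]; simp
    have hsq : g ^ 2 = 1 := by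
      have key : (g + 1) * (g - 1) = 0 := by
        apply LinearMap.ext
        intro v
        have hw := hw_supp v
        simp only [Module.End.mul_apply, LinearMap.add_apply, LinearMap.sub_apply,
          Module.End.one_apply, LinearMap.zero_apply]
        rw [support_two hrt hw]
        simp only [map_add, map_smul, hgdef, irG_er c hc hrt, irG_et c hc hrt, hb, hb']
        module
      have hfact : g * g - 1 = (g + 1) * (g - 1) := by
        rw [mul_sub, add_mul, mul_one, one_mul]; abel
      have h2 : g * g - 1 = 0 := by rw [hfact, key]
      rw [pow_two]
      exact sub_eq_zero.mp h2
    rw [← hcase, pow_mul, hsq, one_pow]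
  · have hlt : 2 * k < m := lt_of_le_of_ne hk2 hcase
    set ω : ℂ := Complex.exp (((2 * θ : ℝ) : ℂ) * Complex.I) with hωdef
    have hω0 : ω ≠ 0 := Complex.exp_ne_zero _
    have hωinv : ω⁻¹ = Complex.exp (((-(2 * θ) : ℝ) : ℂ) * Complex.I) := by
      rw [hωdef, ← Complex.exp_neg]
      push_cast
      ring_nf
    have hsum : ω + ω⁻¹ = (c r t * c t r) - 2 := by
      rw [hωdef, hωinv, Complex.exp_mul_I, Complex.exp_mul_I, hβ]
      rw [← Complex.ofReal_cos, ← Complex.ofReal_sin, ← Complex.ofReal_cos,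
        ← Complex.ofReal_sin, Real.cos_neg, Real.sin_neg, Real.cos_two_mul]
      push_cast
      ring
    have hωm : ω ^ m = 1 := by
      rw [hωdef, ← Complex.exp_nat_mul]
      have hre : (m : ℝ) * (2 * θ) = k * (2 * Real.pi) := by
        rw [hθdef]; field_simp
      have hco : (m : ℂ) * (2 * (θ : ℂ)) = (k : ℂ) * (2 * (Real.pi : ℂ)) := by
        exact_mod_cast hre
      have key : (m : ℂ) * (((2 * θ : ℝ) : ℂ) * Complex.I)
          = (k : ℤ) * (2 * Real.pi * Complex.I) := by
        push_cast
        linear_combination Complex.I * hco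
      rw [key, Complex.exp_int_mul_two_pi_mul_I]
    have hω2 : ω ^ 2 ≠ 1 := by
      intro h
      rw [hωdef, ← Complex.exp_nat_mul, Complex.exp_eq_one_iff] at h
      obtain ⟨n, hn⟩ := h
      have hre : (2 : ℝ) * (2 * θ) = n * (2 * Real.pi) := by
        have := hn
        push_cast at this
        have h2 : ((2 * (2 * θ) : ℝ) : ℂ) * Complex.I = ((n * (2 * Real.pi) : ℝ) : ℂ) * Complex.I := by
          push_cast
          linear_combination this
        have := mul_right_cancel₀ Complex.I_ne_zero h2
        exact_mod_cast this
      have hπ : Real.pi ≠ 0 := Real.pi_ne_zero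
      have hθm : θ * m = k * Real.pi := by
        rw [hθdef]; field_simp
      have h2k : (2 * k : ℝ) = n * m := by
        have h := congrArg (· * (m : ℝ)) hre
        have hre' : (2 * k : ℝ) * (2 * Real.pi) = (n * m) * (2 * Real.pi) := by
          linear_combination h - 4 * hθm
        have h2π : (2 * Real.pi : ℝ) ≠ 0 := by positivity
        exact mul_right_cancel₀ h2π hre'
      have h2k' : (2 * k : ℤ) = n * m := by exact_mod_cast h2k
      have hmpos : (0:ℤ) < m := by exact_mod_cast Nat.pos_of_ne_zero hm
      have hkpos : (0:ℤ) < 2 * k := by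
        have : (1:ℤ) ≤ k := by exact_mod_cast hk1
        linarith
      rcases lt_or_ge n 1 with hn | hn
      · nlinarith
      · have hmlt : (2 * k : ℤ) < m := by exact_mod_cast hlt
        nlinarith
    have h1 : ω ≠ 1 := by
      intro h; apply hω2; rw [h]; ring
    have h2 : ω ≠ ω⁻¹ := by
      intro h
      apply hω2
      have : ω * ω = ω * ω⁻¹ := by rw [← h]
      rw [mul_inv_cancel₀ hω0] at this
      rw [pow_two, this]
    have key2 : (g * g - (c r t * c t r - 2) • g + 1) * (g - 1) = 0 := by
      apply LinearMap.ext
      intro v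
      have hw := hw_supp v
      rw [hgdef] at hw
      have hq := irG_quad c hc hrt hw
      rw [← hgdef] at hq
      simp only [Module.End.mul_apply, LinearMap.sub_apply, LinearMap.add_apply,
        LinearMap.smul_apply, Module.End.one_apply, LinearMap.zero_apply]
      rw [hq]
      abel
    have hfac : (g - algebraMap ℂ (Module.End ℂ (S → ℂ)) ω)
        * (g - algebraMap ℂ (Module.End ℂ (S → ℂ)) ω⁻¹)
        = g * g - (c r t * c t r - 2) • g + 1 := by
      rw [sub_mul, mul_sub, mul_sub, ← map_mul, mul_inv_cancel₀ hω0, map_one,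
        ← Algebra.commutes ω⁻¹ g, ← Algebra.smul_def, ← Algebra.smul_def, ← hsum,
        add_smul]
      abel
    have cubic : (g - algebraMap ℂ (Module.End ℂ (S → ℂ)) ω)
        * (g - algebraMap ℂ (Module.End ℂ (S → ℂ)) ω⁻¹) * (g - 1) = 0 := by
      rw [hfac]
      exact key2
    exact pow_eq_one_of_cubic g ω m hm hωm h1 h2 cubic



/-- Given a finite-rank Coxeter system with all `m_{rt}` finite, and data
`k_{rt} ∈ ℕ` (`1 ≤ k_{rt} = k_{tr} ≤ m_{rt}/2`), `a_r^t ∈ ℂ×`, the formulas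
`r·α_r = -α_r`, `r·α_t = α_t + 2(a_r^t/a_t^r)cos(k_{rt}π/m_{rt})α_r` define a
representation of `W` on `⊕_{s∈S} ℂα_s`, and each simple reflection fixes a
subspace of codimension 1 (the IR-condition). -/
theorem ir_representation_exists {S : Type*} [Fintype S] [DecidableEq S]
    {W : Type*} [Group W] (M : CoxeterMatrix S) (cs : CoxeterSystem M W)
    (hfin : ∀ r t : S, M r t ≠ 0)
    (k : S → S → ℕ) (hsym : ∀ r t, k r t = k t r)
    (hk1 : ∀ r t : S, r ≠ t → 1 ≤ k r t) (hk2 : ∀ r t : S, r ≠ t → 2 * k r t ≤ M r t)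
    (a : S → S → ℂ) (ha : ∀ r t, a r t ≠ 0)
    (α : S → (S → ℂ)) (hα : ∀ s, α s = Pi.single s 1) :
    ∃ ρ : Representation ℂ W (S → ℂ),
      (∀ r : S, ρ (cs.simple r) (α r) = -α r) ∧
      (∀ r t : S, r ≠ t → ρ (cs.simple r) (α t) =
        α t + (2 * (a r t / a t r) *
          ((Real.cos (k r t * Real.pi / (M r t)) : ℝ) : ℂ)) • α r) ∧
      (∀ s : S, Module.finrank ℂ
        (LinearMap.ker (ρ (cs.simple s) - LinearMap.id)) = Fintype.card S - 1) := by
  classical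
  set c : S → S → ℂ := fun r t => if r = t then 0 else
    2 * (a r t / a t r) * ((Real.cos (k r t * Real.pi / (M r t)) : ℝ) : ℂ) with hcdef
  have hc : ∀ u, c u u = 0 := fun u => by simp [hcdef]
  have hcne : ∀ r t, r ≠ t → c r t =
      2 * (a r t / a t r) * ((Real.cos (k r t * Real.pi / (M r t)) : ℝ) : ℂ) :=
    fun r t h => by simp [hcdef, h]
  have hlift : M.IsLiftable (fun s => (irSigma c s : Module.End ℂ (S → ℂ))) := by
    intro r t
    by_cases hrt : r = t
    · subst hrt
      rw [M.diagonal, pow_one]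
      apply LinearMap.ext
      intro v
      exact irSigma_sq c hc r v
    · refine irG_pow_eq_one c hc hrt (M r t) (k r t) (hfin r t) (hk1 r t hrt) (hk2 r t hrt)
        (2 * (a r t / a t r)) (2 * (a t r / a r t)) ?_ ?_ ?_
      · have h4 : (2 * (a r t / a t r)) * (2 * (a t r / a r t))
            = 4 * ((a r t * a t r) / (a t r * a r t)) := by ring
        rw [h4, mul_comm (a r t) (a t r), div_self (mul_ne_zero (ha t r) (ha r t)), mul_one]
      · exact hcne r t hrt
      · rw [hcne t r (Ne.symm hrt), hsym t r, M.symmetric t r]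
  set ρ : Representation ℂ W (S → ℂ) := cs.lift ⟨fun s => irSigma c s, hlift⟩ with hρdef
  have hρs : ∀ s : S, ρ (cs.simple s) = irSigma c s := fun s => cs.lift_apply_simple hlift s
  refine ⟨ρ, ?_, ?_, ?_⟩
  · intro r
    rw [hρs r, hα]
    exact irSigma_single_self c hc r
  · intro r t hrt
    rw [hρs r, hα, hα, irSigma_single c r (Ne.symm hrt), hcne r t hrt]
  · intro s
    set φ : (S → ℂ) →ₗ[ℂ] ℂ :=
      (∑ u : S, c s u • (LinearMap.proj u : (S → ℂ) →ₗ[ℂ] ℂ))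
        - (2 : ℂ) • (LinearMap.proj s : (S → ℂ) →ₗ[ℂ] ℂ) with hφdef
    have hφ : ∀ v : S → ℂ, φ v = (∑ u, c s u * v u) - 2 * v s := by
      intro v
      simp [hφdef, LinearMap.sum_apply, LinearMap.proj_apply]
    have hker : LinearMap.ker (ρ (cs.simple s) - LinearMap.id) = LinearMap.ker φ := by
      ext v
      rw [LinearMap.mem_ker, LinearMap.mem_ker]
      have hvec : ((ρ (cs.simple s) - LinearMap.id : (S → ℂ) →ₗ[ℂ] (S → ℂ))) v
          = (φ v) • (Pi.single s 1 : S → ℂ) := by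
        funext u
        rw [LinearMap.sub_apply, LinearMap.id_apply, hρs s]
        by_cases hu : u = s
        · subst hu
          simp only [Pi.sub_apply, irSigma_apply, if_pos rfl, if_true, hφ, Pi.smul_apply,
            Pi.single_eq_same, smul_eq_mul, mul_one]
          ring
        · simp [Pi.sub_apply, irSigma_apply_ne c s v hu, Pi.single_apply, hu]
      rw [hvec]
      constructor
      · intro h
        have := congrFun h s
        simpa using this
      · intro h
        rw [h, zero_smul]
    rw [hker]
    have hsurj : Function.Surjective φ := by
      intro z
      refine ⟨(-z / 2) • (Pi.single s 1 : S → ℂ), ?_⟩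
      rw [hφ]
      have : ∀ u, c s u * ((-z / 2) • (Pi.single s 1 : S → ℂ)) u = 0 := by
        intro u
        by_cases hu : u = s
        · subst hu; simp [hc]
        · simp [Pi.single_apply, hu]
      rw [Finset.sum_congr rfl fun u _ => this u]
      simp
      ring
    have hrn := LinearMap.finrank_range_add_finrank_ker φ
    rw [LinearMap.range_eq_top.mpr hsurj] at hrn
    rw [finrank_top, Module.finrank_self, Module.finrank_pi] at hrn
    have hpos : 0 < Fintype.card S := Fintype.card_pos_iff.mpr ⟨s⟩
    omega
end

section
/- Let (W,S) be a Coxeter system of finite rank with all m_{rt} < ∞, and let V be an IR-representation of W with basis {α_s : s ∈ S}. Then for any distinct r, t ∈ S, the 2-dimensional subspace spanned by α_r and α_t is stable under the dihedral subgroup ⟨r, t⟩, and as a representation of ⟨r,t⟩ it is isomorphic to ρ_{k} for some integer 1 ≤ k ≤ m_{rt}/2. -/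
/-!
A simple reflection acts by `v ↦ v + φ(v) • α_s`, so it preserves every subspace containing `α_s`;
this gives the stability of `⟨α_r, α_t⟩`. Write `r • α_t = α_t + c • α_r` and
`t • α_r = α_r + d • α_t`. On the plane, `f = r t` satisfies `f² = (cd - 2) f - 1` and `f ^ m = 1`.
If `c ≠ 0` (or symmetrically `d ≠ 0`), `α_t` is not an eigenvector of `f`, so an eigenvalue `ζ`
of `f` is an `m`-th root of unity other than `±1`; hence `cd - 2 = ζ + ζ⁻¹ = 2 cos (2πk/m)`,
i.e. `cd = 4 cos² (kπ/m)` with `0 < 2k < m`, and rescaling `α_r, α_t` gives `ρ_k`.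
If `c = d = 0`, then `f = -1`, so `m` is even and `k = m/2`.
-/

open Real

theorem exists_apply_eq_add_smul_of_finrank_quotient_eq_one {K V : Type*} [Field K]
    [NeZero (2 : K)] [AddCommGroup V] [Module K V] {H : Submodule K V}
    (hH : Module.finrank K (V ⧸ H) = 1) {f : V →ₗ[K] V} (hfix : ∀ v ∈ H, f v = v) {x : V}
    (hx : f x = -x) (hx0 : x ≠ 0) (v : V) : ∃ c : K, f v = v + c • x := by
  have hxH : H.mkQ x ≠ 0 := by
    rw [Ne, Submodule.mkQ_apply, Submodule.Quotient.mk_eq_zero]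
    intro hmem
    have h2x : (2 : K) • x = 0 := by
      rw [two_smul]; nth_rw 1 [← hfix x hmem]; rw [hx, neg_add_cancel]
    exact hx0 ((smul_eq_zero.mp h2x).resolve_left two_ne_zero)
  obtain ⟨a, ha⟩ := (finrank_eq_one_iff_of_nonzero' _ hxH).mp hH (H.mkQ v)
  have hmem : v - a • x ∈ H := by
    rw [← Submodule.Quotient.mk_eq_zero, Submodule.Quotient.mk_sub, Submodule.Quotient.mk_smul]
    exact sub_eq_zero.mpr ha.symm
  refine ⟨-2 * a, ?_⟩
  calc f v = f (v - a • x) + a • f x := by rw [← map_smul, ← map_add, sub_add_cancel]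
    _ = v + (-2 * a) • x := by rw [hfix _ hmem, hx]; module

theorem Representation.apply_mem_of_mem_closure {G R V : Type*} [Group G] [CommSemiring R]
    [AddCommMonoid V] [Module R V] (ρ : Representation R G V) (P : Submodule R V) {s : Set G}
    (hs : ∀ g ∈ s, ∀ v ∈ P, ρ g v ∈ P ∧ ρ g⁻¹ v ∈ P) {w : G} (hw : w ∈ Subgroup.closure s) :
    ∀ v ∈ P, ρ w v ∈ P := by
  induction hw using Subgroup.closure_induction'' with
  | mem g hg => exact fun v hv => (hs g hg v hv).1
  | inv_mem g hg => exact fun v hv => (hs g hg v hv).2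
  | one => simp
  | mul g h _ _ hg hh => exact fun v hv => by simpa using hg _ (hh v hv)

theorem Module.End.pow_succ_apply_of_apply_eq_smul_add {R M : Type*} [CommSemiring R]
    [AddCommMonoid M] [Module R M] {f : Module.End R M} {a : R} {u w : M}
    (hu : f u = a • u + w) (hw : f w = a • w) (n : ℕ) :
    (f ^ (n + 1)) u = a ^ (n + 1) • u + ((n + 1) * a ^ n) • w := by
  induction n with
  | zero => simp [hu]
  | succ n ih =>
    rw [pow_succ', Module.End.mul_apply, ih, map_add, map_smul, map_smul, hu, hw]
    push_cast
    module

theorem exists_add_inv_eq_two_mul_cos_of_pow_eq_one {ζ : ℂ} {m : ℕ} (hm : m ≠ 0)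
    (hζ : ζ ^ m = 1) (h1 : ζ ≠ 1) (h2 : ζ ≠ -1) :
    ∃ k : ℕ, 0 < k ∧ 2 * k < m ∧ ζ + ζ⁻¹ = 2 * ((cos (2 * π * k / m) : ℝ) : ℂ) := by
  have : NeZero m := ⟨hm⟩
  have hε := Complex.isPrimitiveRoot_exp m hm
  set ε := Complex.exp (2 * π * Complex.I / m)
  have hcos : ∀ j : ℕ, ε ^ j + (ε ^ j)⁻¹ = 2 * ((cos (2 * π * j / m) : ℝ) : ℂ) := by
    intro j
    have hεj : ε ^ j = Complex.exp (((2 * π * j / m : ℝ) : ℂ) * Complex.I) := by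
      rw [← Complex.exp_nat_mul]; push_cast; ring_nf
    rw [hεj, ← Complex.exp_neg, Complex.ofReal_cos, Complex.two_cos, neg_mul]
  obtain ⟨j, hjm, rfl⟩ := hε.eq_pow_of_pow_eq_one hζ
  have hj0 : j ≠ 0 := by rintro rfl; exact h1 (pow_zero ε)
  have h2j : 2 * j ≠ m := by
    intro h
    have hsq : (ε ^ j) ^ 2 = 1 := by rw [← pow_mul, mul_comm, h, hε.pow_eq_one]
    exact (sq_eq_one_iff.mp hsq).elim h1 h2
  rcases lt_or_gt_of_ne h2j with hlt | hgt
  · exact ⟨j, Nat.pos_of_ne_zero hj0, hlt, hcos j⟩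
  · have hinv : ε ^ (m - j) = (ε ^ j)⁻¹ := by
      refine eq_inv_of_mul_eq_one_left ?_
      rw [← pow_add, Nat.sub_add_cancel hjm.le, hε.pow_eq_one]
    refine ⟨m - j, by omega, by omega, ?_⟩
    rw [← hcos (m - j), hinv, inv_inv, add_comm]

theorem exists_eq_two_mul_div_mul {c d C : ℂ} (hC : C ≠ 0) (h : c * d = 4 * C ^ 2) :
    ∃ a b : ℂ, a ≠ 0 ∧ b ≠ 0 ∧ c = 2 * (a / b) * C ∧ d = 2 * (b / a) * C := by
  have hc : c ≠ 0 := by rintro rfl; simp [hC] at h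
  refine ⟨c, 2 * C, hc, mul_ne_zero two_ne_zero hC, by field_simp, ?_⟩
  field_simp
  linear_combination h

section Plane

variable {V : Type*} [AddCommGroup V] [Module ℂ V]

theorem exists_pow_eq_one_of_apply_apply_eq {f : Module.End ℂ V} {u : V} {T : ℂ} {m : ℕ}
    (hm : m ≠ 0) (hquad : f (f u) = T • f u - u) (hpow : (f ^ m) u = u)
    (hu : ∀ z : ℂ, f u ≠ z • u) :
    ∃ ζ : ℂ, ζ ^ m = 1 ∧ ζ ≠ 1 ∧ ζ ≠ -1 ∧ T = ζ + ζ⁻¹ := by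
  obtain ⟨ζ, hζ⟩ : ∃ ζ : ℂ, 1 * (ζ * ζ) + (-T) * ζ + 1 = 0 :=
    exists_quadratic_eq_zero one_ne_zero (IsAlgClosed.exists_eq_mul_self _)
  have hζ0 : ζ ≠ 0 := by rintro rfl; simp at hζ
  have hT : T = ζ + ζ⁻¹ := by field_simp; linear_combination -hζ
  -- `(f - ζ) (f - ζ⁻¹) u = 0`, so `w = (f - ζ⁻¹) u` is a `ζ`-eigenvector
  set w := f u - ζ⁻¹ • u with hw
  have hw0 : w ≠ 0 := sub_ne_zero.mpr (hu _)
  have hfw : f w = ζ • w := by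
    rw [hw, map_sub, map_smul, hquad, hT, smul_sub, smul_smul, mul_inv_cancel₀ hζ0]
    module
  have hζm : ζ ^ m = 1 := by
    have hwm : (f ^ m) w = w := by
      rw [hw, map_sub, map_smul, ← Module.End.mul_apply, ← pow_succ, pow_succ',
        Module.End.mul_apply, hpow]
    have hev : f.HasEigenvector ζ w := ⟨Module.End.mem_eigenspace_iff.mpr hfw, hw0⟩
    rw [hev.pow_apply, ← one_smul ℂ w, smul_smul, mul_one] at hwm
    exact smul_left_injective ℂ hw0 hwm
  -- a double root would make `f` a nontrivial Jordan block on `span {u, w}`, of infinite order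
  have hne : ζ⁻¹ ≠ ζ := by
    intro h
    obtain ⟨n, rfl⟩ := Nat.exists_eq_succ_of_ne_zero hm
    have hjordan := Module.End.pow_succ_apply_of_apply_eq_smul_add
      (by rw [hw, h]; abel : f u = ζ • u + w) hfw n
    rw [hpow, hζm, one_smul, left_eq_add, smul_eq_zero] at hjordan
    refine hjordan.elim (fun h0 => ?_) hw0
    exact mul_ne_zero (by exact_mod_cast n.succ_ne_zero) (pow_ne_zero n hζ0) h0
  refine ⟨ζ, hζm, ?_, ?_, hT⟩ <;> rintro rfl <;> norm_num at hne

theorem exists_mul_eq_four_mul_cos_sq {σ τ : Module.End ℂ V} {x y : V} {c d : ℂ} {m : ℕ}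
    (hm : m ≠ 0) (hxy : LinearIndependent ℂ ![x, y]) (hσx : σ x = -x) (hσy : σ y = y + c • x)
    (hτx : τ x = x + d • y) (hτy : τ y = -y) (hστ : ((σ * τ) ^ m) y = y) (hc : c ≠ 0) :
    ∃ k : ℕ, 0 < k ∧ 2 * k < m ∧ c * d = 4 * ((cos (k * π / m) : ℝ) : ℂ) ^ 2 := by
  set f := σ * τ
  have hfy : f y = -y - c • x := by
    rw [Module.End.mul_apply, hτy, map_neg, hσy]; module
  have hfx : f x = (c * d - 1) • x + d • y := by
    rw [Module.End.mul_apply, hτx, map_add, map_smul, hσx, hσy]; module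
  have hquad : f (f y) = (c * d - 2) • f y - y := by
    rw [hfy, map_sub, map_neg, map_smul, hfy, hfx]; module
  have hu : ∀ z : ℂ, f y ≠ z • y := by
    intro z h
    have hdep : (-c) • x + (-1 - z) • y = 0 := by
      rw [hfy] at h; linear_combination (norm := module) h
    exact hc (neg_eq_zero.mp (LinearIndependent.pair_iff.mp hxy _ _ hdep).1)
  obtain ⟨ζ, hζm, h1, h2, hT⟩ := exists_pow_eq_one_of_apply_apply_eq hm hquad hστ hu
  obtain ⟨k, hk0, hkm, hk⟩ := exists_add_inv_eq_two_mul_cos_of_pow_eq_one hm hζm h1 h2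
  refine ⟨k, hk0, hkm, ?_⟩
  rw [show 2 * π * k / m = 2 * (k * π / m) by ring, cos_two_mul] at hk
  push_cast at hk ⊢
  linear_combination hT + hk

theorem exists_eq_two_mul_cos_of_reflections {σ τ : Module.End ℂ V} {x y : V} {c d : ℂ}
    {m : ℕ} (hm : m ≠ 0) (hxy : LinearIndependent ℂ ![x, y]) (hσx : σ x = -x)
    (hσy : σ y = y + c • x) (hτx : τ x = x + d • y) (hτy : τ y = -y)
    (hστ : (σ * τ) ^ m = 1) (hτσ : (τ * σ) ^ m = 1) :
    ∃ (k : ℕ) (a b : ℂ), a ≠ 0 ∧ b ≠ 0 ∧ 1 ≤ k ∧ 2 * k ≤ m ∧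
      c = 2 * (a / b) * ((cos (k * π / m) : ℝ) : ℂ) ∧
      d = 2 * (b / a) * ((cos (k * π / m) : ℝ) : ℂ) := by
  by_cases hcd : c = 0 ∧ d = 0
  · obtain ⟨rfl, rfl⟩ := hcd
    -- here `σ τ` acts as `-1` on `span {x, y}`, forcing `m` even and `cos (π / 2) = 0`
    have hev : (σ * τ).HasEigenvector (-1) x :=
      ⟨Module.End.mem_eigenspace_iff.mpr (by simp [hτx, hσx]), hxy.ne_zero 0⟩
    have hpow := hev.pow_apply m
    rw [hστ, Module.End.one_apply, eq_comm, ← one_smul ℂ x] at hpow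
    obtain ⟨k, rfl⟩ := (neg_one_pow_eq_one_iff_even (by norm_num)).mp
      (smul_left_injective ℂ (hxy.ne_zero 0) (by simpa using hpow))
    refine ⟨k, 1, 1, one_ne_zero, one_ne_zero, by omega, by omega, ?_, ?_⟩ <;>
    · have hk : (k : ℝ) ≠ 0 := by exact_mod_cast fun h => hm (by omega)
      rw [show (k : ℝ) * π / ((k + k : ℕ) : ℝ) = π / 2 by push_cast; field_simp; ring]
      simp
  obtain ⟨k, hk0, hkm, hk⟩ : ∃ k : ℕ, 0 < k ∧ 2 * k < m ∧
      c * d = 4 * ((cos (k * π / m) : ℝ) : ℂ) ^ 2 := by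
    rcases not_and_or.mp hcd with hc | hd
    · exact exists_mul_eq_four_mul_cos_sq hm hxy hσx hσy hτx hτy (by rw [hστ]; rfl) hc
    · simpa only [mul_comm d] using exists_mul_eq_four_mul_cos_sq hm
        (LinearIndependent.pair_symm_iff.mp hxy) hτy hτx hσy hσx (by rw [hτσ]; rfl) hd
  have hcos : 0 < cos (k * π / m) := by
    have hmpos : (0 : ℝ) < m := by positivity
    apply cos_pos_of_mem_Ioo
    constructor
    · have : (0 : ℝ) < k * π / m := by positivity
      linarith [pi_pos]
    · rw [div_lt_iff₀ hmpos]
      have : (2 * k : ℝ) < m := by exact_mod_cast hkm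
      nlinarith [pi_pos]
  obtain ⟨a, b, ha, hb, hca, hdb⟩ :=
    exists_eq_two_mul_div_mul (Complex.ofReal_ne_zero.mpr hcos.ne') hk
  exact ⟨k, a, b, ha, hb, hk0, hkm.le, hca, hdb⟩

end Plane

theorem ir_rep_dihedral_restriction_general {S : Type*}
    {W : Type*} [Group W] (M : CoxeterMatrix S) (cs : CoxeterSystem M W)
    (hfin : ∀ r t : S, M r t ≠ 0)
    {V : Type*} [AddCommGroup V] [Module ℂ V]
    (ρ : Representation ℂ W V) (α : Module.Basis S ℂ V)
    (H : S → Submodule ℂ V)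
    (hcodim : ∀ s : S, Module.finrank ℂ (V ⧸ H s) = 1)
    (hfix : ∀ s : S, ∀ v ∈ H s, ρ (cs.simple s) v = v)
    (hneg : ∀ s : S, ρ (cs.simple s) (α s) = -α s)
    (r t : S) (hrt : r ≠ t) :
    (∀ w ∈ Subgroup.closure {cs.simple r, cs.simple t},
      ∀ v ∈ Submodule.span ℂ {α r, α t}, ρ w v ∈ Submodule.span ℂ {α r, α t}) ∧
    ∃ (kk : ℕ) (a b : ℂ), a ≠ 0 ∧ b ≠ 0 ∧ 1 ≤ kk ∧ 2 * kk ≤ M r t ∧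
      ρ (cs.simple r) (α t) =
        α t + (2 * (a / b) * ((Real.cos (kk * Real.pi / (M r t)) : ℝ) : ℂ)) • α r ∧
      ρ (cs.simple t) (α r) =
        α r + (2 * (b / a) * ((Real.cos (kk * Real.pi / (M r t)) : ℝ) : ℂ)) • α t := by
  have hrefl (s : S) (v : V) : ∃ c : ℂ, ρ (cs.simple s) v = v + c • α s :=
    exists_apply_eq_add_smul_of_finrank_quotient_eq_one (hcodim s) (hfix s) (hneg s)
      (α.ne_zero s) v
  set P := Submodule.span ℂ {α r, α t}
  have hstable (s : S) (hs : α s ∈ P) (v : V) (hv : v ∈ P) : ρ (cs.simple s) v ∈ P := by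
    obtain ⟨c, hc⟩ := hrefl s v
    rw [hc]
    exact P.add_mem hv (P.smul_mem c hs)
  refine ⟨fun w hw => Representation.apply_mem_of_mem_closure ρ P ?_ hw, ?_⟩
  · rintro _ (rfl | rfl) v hv <;> rw [cs.inv_simple] <;>
      exact ⟨hstable _ (Submodule.subset_span (by simp)) v hv,
        hstable _ (Submodule.subset_span (by simp)) v hv⟩
  obtain ⟨c, hc⟩ := hrefl r (α t)
  obtain ⟨d, hd⟩ := hrefl t (α r)
  have hαrt : LinearIndependent ℂ ![α r, α t] := by
    rw [show ![α r, α t] = α ∘ ![r, t] by ext i; fin_cases i <;> rfl]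
    exact α.linearIndependent.comp _ (injective_pair_iff_ne.mpr hrt)
  have hστ : (ρ (cs.simple r) * ρ (cs.simple t)) ^ M r t = 1 := by
    rw [← map_mul, ← map_pow, cs.simple_mul_simple_pow, map_one]
  have hτσ : (ρ (cs.simple t) * ρ (cs.simple r)) ^ M r t = 1 := by
    rw [← map_mul, ← map_pow, cs.simple_mul_simple_pow', map_one]
  rw [hc, hd]
  simpa only [add_right_inj, smul_left_inj (α.ne_zero _)] using
    exists_eq_two_mul_cos_of_reflections (hfin r t) hαrt (hneg r) hc hd (hneg t) hστ hτσ

/-- Let `V` be an IR-representation of a finite-rank Coxeter system with all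
`m_{rt} < ∞`, with basis `{α_s}`. For distinct `r, t`, the plane `⟨α_r, α_t⟩` is
stable under the dihedral subgroup `⟨r,t⟩`, and on it the latter acts as `ρ_k` for
some `1 ≤ k ≤ m_{rt}/2`: after rescaling the basis vectors by nonzero scalars
`a, b`, the action takes the standard `ρ_k` form. -/
theorem ir_rep_dihedral_restriction {S : Type*} [Fintype S] [DecidableEq S]
    {W : Type*} [Group W] (M : CoxeterMatrix S) (cs : CoxeterSystem M W)
    (hfin : ∀ r t : S, M r t ≠ 0)
    {V : Type*} [AddCommGroup V] [Module ℂ V]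
    (ρ : Representation ℂ W V) (α : Module.Basis S ℂ V)
    (H : S → Submodule ℂ V)
    (hcodim : ∀ s : S, Module.finrank ℂ (V ⧸ H s) = 1)
    (hfix : ∀ s : S, ∀ v ∈ H s, ρ (cs.simple s) v = v)
    (hneg : ∀ s : S, ρ (cs.simple s) (α s) = -α s)
    (r t : S) (hrt : r ≠ t) :
    (∀ w ∈ Subgroup.closure {cs.simple r, cs.simple t},
      ∀ v ∈ Submodule.span ℂ {α r, α t}, ρ w v ∈ Submodule.span ℂ {α r, α t}) ∧
    ∃ (kk : ℕ) (a b : ℂ), a ≠ 0 ∧ b ≠ 0 ∧ 1 ≤ kk ∧ 2 * kk ≤ M r t ∧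
      ρ (cs.simple r) (α t) =
        α t + (2 * (a / b) * ((Real.cos (kk * Real.pi / (M r t)) : ℝ) : ℂ)) • α r ∧
      ρ (cs.simple t) (α r) =
        α r + (2 * (b / a) * ((Real.cos (kk * Real.pi / (M r t)) : ℝ) : ℂ)) • α t :=
  ir_rep_dihedral_restriction_general M cs hfin ρ α H hcodim hfix hneg r t hrt
end

section
/- Let V = ⊕_{i=1}^n ℂα_i be an IR-representation of a finite-rank Coxeter system (W,S) (with all m_{ij} < ∞) defined by data (k_{ij}, a_i^j), and suppose the associated graph G̃ is connected. Let A be the n×n matrix with A_{ii} = 1 and A_{ij} = -(a_i^j/a_j^i)cos(k_{ij}π/m_{ij}) for i ≠ j. Then V is irreducible if and only if A is invertible. -/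
/-- For an IR-representation `V = ⊕ ℂα_s` with connected associated graph `G̃`,
`V` is irreducible iff the matrix `A` (`A_{ii} = 1`,
`A_{ij} = -(a_i^j/a_j^i)cos(k_{ij}π/m_{ij})`) is invertible. -/
theorem ir_rep_irreducible_iff_matrix_invertible {S : Type*} [Fintype S] [DecidableEq S]
    {W : Type*} [Group W] (M : CoxeterMatrix S) (cs : CoxeterSystem M W)
    (hfin : ∀ r t : S, M r t ≠ 0)
    (k : S → S → ℕ) (hsym : ∀ r t, k r t = k t r)
    (hk1 : ∀ r t : S, r ≠ t → 1 ≤ k r t) (hk2 : ∀ r t : S, r ≠ t → 2 * k r t ≤ M r t)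
    (a : S → S → ℂ) (ha : ∀ r t, a r t ≠ 0)
    (α : S → (S → ℂ)) (hα : ∀ s, α s = Pi.single s 1)
    (ρ : Representation ℂ W (S → ℂ))
    (hneg : ∀ r : S, ρ (cs.simple r) (α r) = -α r)
    (hact : ∀ r t : S, r ≠ t → ρ (cs.simple r) (α t) =
      α t + (2 * (a r t / a t r) *
        ((Real.cos (k r t * Real.pi / (M r t)) : ℝ) : ℂ)) • α r)
    (Gt : SimpleGraph S)
    (hGt : ∀ r t : S, Gt.Adj r t ↔ r ≠ t ∧ 2 * k r t ≠ M r t)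
    (hconn : Gt.Connected)
    (A : Matrix S S ℂ)
    (hA : ∀ i j : S, A i j = if i = j then 1 else
      -(a i j / a j i) * ((Real.cos (k i j * Real.pi / (M i j)) : ℝ) : ℂ)) :
    (∀ p : Submodule ℂ (S → ℂ), (∀ w : W, ∀ v ∈ p, ρ w v ∈ p) → p = ⊥ ∨ p = ⊤) ↔
      IsUnit A := by
  classical
  -- every vector is a combination of the `α i`
  have hvsum : ∀ v : S → ℂ, v = ∑ i, v i • α i := by
    intro v
    funext j
    simp [hα, Finset.sum_apply, Pi.single_apply]
  -- cosine is nonzero on edges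
  have hcos : ∀ r t : S, r ≠ t → 2 * k r t ≠ M r t →
      ((Real.cos (↑(k r t) * Real.pi / (M r t)) : ℝ) : ℂ) ≠ 0 := by
    intro r t hrt hne
    have hm : 0 < (M r t : ℝ) := by exact_mod_cast Nat.pos_of_ne_zero (hfin r t)
    have hk : (1 : ℝ) ≤ (k r t : ℝ) := by exact_mod_cast hk1 r t hrt
    have h2k : 2 * (k r t : ℝ) < (M r t : ℝ) := by
      exact_mod_cast lt_of_le_of_ne (hk2 r t hrt) hne
    have hpos : 0 < Real.cos (↑(k r t) * Real.pi / (M r t)) := by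
      apply Real.cos_pos_of_mem_Ioo
      constructor
      · have h1 : 0 < (k r t : ℝ) * Real.pi / (M r t) := by positivity
        have h2 : 0 < Real.pi / 2 := by positivity
        linarith
      · rw [div_lt_iff₀ hm]
        nlinarith [Real.pi_pos]
    exact_mod_cast hpos.ne'
  -- the key formula: action of a simple reflection on any vector
  have hL1 : ∀ (r : S) (v : S → ℂ),
      ρ (cs.simple r) v = v + (-(2 * A.mulVec v r)) • α r := by
    intro r v
    have hstep : ∀ i : S, ρ (cs.simple r) (α i) = α i + ((-2) * A r i) • α r := by
      intro i
      by_cases hir : i = r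
      · subst hir
        rw [hneg, hA, if_pos rfl]
        funext j
        simp
        ring
      · rw [hact r i (Ne.symm hir), hA, if_neg (Ne.symm hir)]
        congr 1
        ring
    calc ρ (cs.simple r) v = ρ (cs.simple r) (∑ i, v i • α i) := by rw [← hvsum]
      _ = ∑ i, v i • ρ (cs.simple r) (α i) := by rw [map_sum]; simp
      _ = ∑ i, (v i • α i + (v i * ((-2) * A r i)) • α r) := by
          refine Finset.sum_congr rfl fun i _ => ?_
          rw [hstep, smul_add, smul_smul]
      _ = (∑ i, v i • α i) + (∑ i, v i * ((-2) * A r i)) • α r := by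
          rw [Finset.sum_add_distrib, Finset.sum_smul]
      _ = v + (-(2 * A.mulVec v r)) • α r := by
          rw [← hvsum]
          congr 2
          have : A.mulVec v r = ∑ i, A r i * v i := by
            simp [Matrix.mulVec, dotProduct]
          rw [this, Finset.mul_sum, ← Finset.sum_neg_distrib]
          exact Finset.sum_congr rfl fun i _ => by ring
  constructor
  · -- irreducible → A invertible
    intro hirr
    by_contra hA'
    -- S is nontrivial
    have hnt : Nontrivial S := by
      by_contra h
      have hss : Subsingleton S := not_nontrivial_iff_subsingleton.mp h
      apply hA'
      have hA1 : A = 1 := by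
        ext i j
        have : i = j := Subsingleton.elim i j
        simp [hA, this, Matrix.one_apply]
      rw [hA1]
      exact isUnit_one
    have hdet : A.det = 0 := by
      by_contra h
      exact hA' ((Matrix.isUnit_iff_isUnit_det A).mpr (isUnit_iff_ne_zero.mpr h))
    obtain ⟨x, hx0, hAx⟩ := Matrix.exists_mulVec_eq_zero_iff.mpr hdet
    -- x is fixed by all of W
    have hfix : ∀ w : W, ρ w x = x := by
      intro w
      apply cs.simple_induction w
      · intro i
        rw [hL1]
        have : A.mulVec x i = 0 := by rw [hAx]; rfl
        rw [this]
        simp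
      · simp
      · intro w1 w2 h1 h2
        rw [map_mul]
        simp only [Module.End.mul_apply]
        rw [h2, h1]
    have hinv : ∀ w : W, ∀ v ∈ Submodule.span ℂ ({x} : Set (S → ℂ)),
        ρ w v ∈ Submodule.span ℂ ({x} : Set (S → ℂ)) := by
      intro w v hv
      obtain ⟨c, rfl⟩ := Submodule.mem_span_singleton.mp hv
      rw [LinearMap.map_smul, hfix]
      exact Submodule.smul_mem _ _ (Submodule.mem_span_singleton_self x)
    rcases hirr (Submodule.span ℂ ({x} : Set (S → ℂ))) hinv with h | h
    · apply hx0
      have hxm := Submodule.mem_span_singleton_self (R := ℂ) x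
      rw [h] at hxm
      simpa using hxm
    · -- span of one vector can't be everything
      obtain ⟨r, hr⟩ := Function.ne_iff.mp hx0
      obtain ⟨t, ht⟩ := exists_ne r
      have hmem : α t ∈ Submodule.span ℂ ({x} : Set (S → ℂ)) := by
        rw [h]; exact Submodule.mem_top
      obtain ⟨c, hc⟩ := Submodule.mem_span_singleton.mp hmem
      have h1 : c * x t = 1 := by
        have := congrFun hc t
        simpa [hα, Pi.single_apply] using this
      have h2 : c * x r = 0 := by
        have := congrFun hc r
        simpa [hα, Pi.single_apply, Ne.symm ht] using this
      have hcne : c ≠ 0 := by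
        intro h0
        rw [h0, zero_mul] at h1
        exact zero_ne_one h1
      have : x r = 0 := by
        rcases mul_eq_zero.mp h2 with h | h
        · exact absurd h hcne
        · exact h
      exact hr (by simpa using this)
  · -- A invertible → irreducible
    intro hU p hp
    by_cases hbot : p = ⊥
    · left; exact hbot
    right
    obtain ⟨v, hv, hv0⟩ := (Submodule.ne_bot_iff p).mp hbot
    have hAv : A.mulVec v ≠ 0 := by
      intro h
      apply hv0
      have hinj : Function.Injective A.mulVec :=
        Matrix.mulVec_injective_iff_isUnit.mpr hU
      apply hinj
      rw [h, Matrix.mulVec_zero]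
    obtain ⟨r, hr⟩ := Function.ne_iff.mp hAv
    have hr' : A.mulVec v r ≠ 0 := by simpa using hr
    -- α r ∈ p
    have hαr : α r ∈ p := by
      have h1 : ρ (cs.simple r) v ∈ p := hp _ v hv
      have h2 : ρ (cs.simple r) v - v ∈ p := Submodule.sub_mem p h1 hv
      rw [hL1] at h2
      have h3 : (-(2 * A.mulVec v r)) • α r ∈ p := by
        simpa using h2
      have hcne : (-(2 * A.mulVec v r)) ≠ 0 := by
        simpa using hr'
      exact (Submodule.smul_mem_iff p hcne).mp h3
    -- propagation along edges
    have step : ∀ u u' : S, Gt.Adj u u' → α u ∈ p → α u' ∈ p := by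
      intro u u' hadj hu
      obtain ⟨hne, hk⟩ := (hGt u u').mp hadj
      have hne' : u' ≠ u := hne.symm
      have hk' : 2 * k u' u ≠ M u' u := by
        rw [hsym u' u, M.symmetric u' u]
        exact hk
      have h1 : ρ (cs.simple u') (α u) ∈ p := hp _ _ hu
      rw [hact u' u hne'] at h1
      have h2 : (2 * (a u' u / a u u') *
          ((Real.cos (↑(k u' u) * Real.pi / (M u' u)) : ℝ) : ℂ)) • α u' ∈ p := by
        have := Submodule.sub_mem p h1 hu
        simpa using this
      have hcne : (2 * (a u' u / a u u') *
          ((Real.cos (↑(k u' u) * Real.pi / (M u' u)) : ℝ) : ℂ)) ≠ 0 := by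
        apply mul_ne_zero
        · apply mul_ne_zero two_ne_zero
          exact div_ne_zero (ha u' u) (ha u u')
        · exact hcos u' u hne' hk'
      exact (Submodule.smul_mem_iff p hcne).mp h2
    have walkstep : ∀ (u t' : S) (w : Gt.Walk u t'), α u ∈ p → α t' ∈ p := by
      intro u t' w
      induction w with
      | nil => exact id
      | cons hadj q ih => intro hu; exact ih (step _ _ hadj hu)
    have hall : ∀ t : S, α t ∈ p := by
      intro t
      obtain ⟨w⟩ := hconn.preconnected r t
      exact walkstep r t w hαr
    rw [eq_top_iff]
    intro u _
    rw [hvsum u]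
    exact Submodule.sum_mem p fun i _ => Submodule.smul_mem p _ (hall i)
end

section
/- Let V = ⊕_{s∈S} ℂα_s be an IR-representation of (W,S) (all m_{rt} < ∞) whose associated graph G̃ is connected, and let U ⊊ V be a proper subrepresentation with U ≠ 0. Then W acts trivially on U. -/
/-- For an IR-representation `V = ⊕ ℂα_s` with connected associated graph `G̃`,
any proper nonzero subrepresentation `U` carries the trivial `W`-action. -/
theorem ir_rep_proper_subrep_trivial {S : Type*} [Fintype S] [DecidableEq S]
    {W : Type*} [Group W] (M : CoxeterMatrix S) (cs : CoxeterSystem M W)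
    (hfin : ∀ r t : S, M r t ≠ 0)
    (k : S → S → ℕ) (hsym : ∀ r t, k r t = k t r)
    (hk1 : ∀ r t : S, r ≠ t → 1 ≤ k r t) (hk2 : ∀ r t : S, r ≠ t → 2 * k r t ≤ M r t)
    (a : S → S → ℂ) (ha : ∀ r t, a r t ≠ 0)
    (α : S → (S → ℂ)) (hα : ∀ s, α s = Pi.single s 1)
    (ρ : Representation ℂ W (S → ℂ))
    (hneg : ∀ r : S, ρ (cs.simple r) (α r) = -α r)
    (hact : ∀ r t : S, r ≠ t → ρ (cs.simple r) (α t) =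
      α t + (2 * (a r t / a t r) *
        ((Real.cos (k r t * Real.pi / (M r t)) : ℝ) : ℂ)) • α r)
    (Gt : SimpleGraph S)
    (hGt : ∀ r t : S, Gt.Adj r t ↔ r ≠ t ∧ 2 * k r t ≠ M r t)
    (hconn : Gt.Connected)
    (U : Submodule ℂ (S → ℂ))
    (hUinv : ∀ w : W, ∀ v ∈ U, ρ w v ∈ U)
    (hUne : U ≠ ⊥) (hUproper : U ≠ ⊤) :
    ∀ v ∈ U, ∀ w : W, ρ w v = v := by
  -- the coefficient is nonzero on edges of G̃
  have hcos : ∀ r t : S, Gt.Adj r t → (2 * (a r t / a t r) *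
        ((Real.cos (k r t * Real.pi / (M r t)) : ℝ) : ℂ)) ≠ 0 := by
    intro r t hadj
    rw [hGt] at hadj
    obtain ⟨hne, hk⟩ := hadj
    have hM : (0:ℝ) < M r t := by
      exact_mod_cast Nat.pos_of_ne_zero (hfin r t)
    have h1 : (0:ℝ) < k r t := by exact_mod_cast hk1 r t hne
    have h2 : (2 * k r t : ℝ) < M r t := by
      exact_mod_cast lt_of_le_of_ne (hk2 r t hne) hk
    have hcospos : 0 < Real.cos ((k r t : ℝ) * Real.pi / M r t) := by
      apply Real.cos_pos_of_mem_Ioo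
      constructor
      · have : 0 < (k r t : ℝ) * Real.pi / M r t := by positivity
        have := Real.pi_pos
        linarith
      · rw [div_lt_iff₀ hM]
        nlinarith [Real.pi_pos]
    exact mul_ne_zero (mul_ne_zero two_ne_zero (div_ne_zero (ha r t) (ha t r)))
      (Complex.ofReal_ne_zero.mpr (ne_of_gt hcospos))
  -- every vector is the sum of its coordinates times the basis
  have hsum : ∀ v : S → ℂ, ∑ t, v t • α t = v := by
    intro v
    have h1 : ∀ t : S, v t • α t = Pi.single t (v t) := by
      intro t
      rw [hα, ← Pi.single_smul, smul_eq_mul, mul_one]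
    simp_rw [h1]
    exact Finset.univ_sum_single v
  -- simple reflections move vectors only along α s
  have hspan : ∀ s : S, ∀ v : S → ℂ,
      ρ (cs.simple s) v - v ∈ Submodule.span ℂ {α s} := by
    intro s v
    have key : ρ (cs.simple s) v - v = ∑ t, v t • (ρ (cs.simple s) (α t) - α t) := by
      conv_lhs => rw [← hsum v]
      rw [map_sum]
      simp [smul_sub, Finset.sum_sub_distrib, map_smul]
    rw [key]
    apply Submodule.sum_mem
    intro t _
    apply Submodule.smul_mem
    by_cases hts : t = s
    · subst hts
      rw [hneg t]
      have : -α t - α t = (-2 : ℂ) • α t := by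
        rw [neg_smul, two_smul]; abel
      rw [this]
      exact Submodule.smul_mem _ _ (Submodule.mem_span_singleton_self _)
    · rw [hact s t (Ne.symm hts)]
      have : α t + (2 * (a s t / a t s) *
          ((Real.cos (k s t * Real.pi / (M s t)) : ℝ) : ℂ)) • α s - α t
          = (2 * (a s t / a t s) *
          ((Real.cos (k s t * Real.pi / (M s t)) : ℝ) : ℂ)) • α s := by abel
      rw [this]
      exact Submodule.smul_mem _ _ (Submodule.mem_span_singleton_self _)
  -- no α s lies in U
  have hαU : ∀ s : S, α s ∉ U := by
    intro s hs
    apply hUproper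
    have step : ∀ x y : S, Gt.Adj x y → α x ∈ U → α y ∈ U := by
      intro x y hxy hx
      have h1 : ρ (cs.simple y) (α x) ∈ U := hUinv _ _ hx
      rw [hact y x (Ne.symm hxy.ne)] at h1
      have h2 : (2 * (a y x / a x y) *
          ((Real.cos (k y x * Real.pi / (M y x)) : ℝ) : ℂ)) • α y ∈ U := by
        have := U.sub_mem h1 hx
        simpa using this
      exact (Submodule.smul_mem_iff U (hcos y x hxy.symm)).mp h2
    have walkstep : ∀ x y : S, Gt.Walk x y → α x ∈ U → α y ∈ U := by
      intro x y w
      induction w with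
      | nil => exact id
      | cons h _ ih => exact fun hx => ih (step _ _ h hx)
    have hall : ∀ t : S, α t ∈ U := fun t =>
      (hconn.preconnected s t).elim (fun w => walkstep s t w hs)
    rw [Submodule.eq_top_iff']
    intro f
    rw [← hsum f]
    exact Submodule.sum_mem _ fun t _ => U.smul_mem _ (hall t)
  -- simple reflections fix U pointwise
  have hsimple : ∀ s : S, ∀ v ∈ U, ρ (cs.simple s) v = v := by
    intro s v hv
    by_contra hne
    apply hαU s
    have hmem : ρ (cs.simple s) v - v ∈ U := U.sub_mem (hUinv _ _ hv) hv
    obtain ⟨c, hc⟩ := Submodule.mem_span_singleton.mp (hspan s v)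
    have hc0 : c ≠ 0 := by
      intro h
      apply hne
      rw [h, zero_smul] at hc
      exact sub_eq_zero.mp hc.symm
    rw [← hc] at hmem
    exact (Submodule.smul_mem_iff U hc0).mp hmem
  intro v hv w
  obtain ⟨ω, rfl⟩ := cs.wordProd_surjective w
  induction ω with
  | nil => simp [CoxeterSystem.wordProd_nil]
  | cons s ω ih =>
    rw [CoxeterSystem.wordProd_cons, map_mul, Module.End.mul_apply, ih]
    exact hsimple s v hv
end

section
/- Let V = ⊕_{s∈S} ℂα_s be an IR-representation of (W,S) with all m_{rt} < ∞, and let G̃ be the associated graph with connected components S = ⊔_i S_i. Then the ring of W-equivariant endomorphisms End_W(V) is isomorphic to ℂ^g where g is the number of connected components of G̃. In particular, if G̃ is connected, every W-equivariant endomorphism of V is a scalar. -/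
/-!
A simple reflection `r` fixes every coordinate except the `r`-th, so its `(-1)`-eigenspace is
the line `ℂ α_r`. An endomorphism commuting with `ρ(r)` preserves that eigenspace, hence every
equivariant endomorphism is diagonal in the basis `(α_s)`. A diagonal map with entries `μ`
commutes with `ρ(r)` exactly when `μ_r = μ_t` whenever `α_r` occurs in `ρ(r) α_t`, i.e. whenever
`cos (k_{rt} π / m_{rt}) ≠ 0`, i.e. whenever `r` and `t` are adjacent in `G̃`. So the equivariant
endomorphisms are the diagonal maps whose entries are constant on the components of `G̃`.
-/

/-- The action of the simple reflection `r` of an IR-representation, with `α_s = Pi.single s 1`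
and `c t` the coefficient of `α_r` in `r · α_t`. -/
def IsBasisReflection {K S : Type*} [Field K] [DecidableEq S] (T : Module.End K (S → K))
    (r : S) (c : S → K) : Prop :=
  T (Pi.single r 1) = -Pi.single r 1 ∧
    ∀ t, r ≠ t → T (Pi.single t 1) = Pi.single t 1 + c t • Pi.single r 1

namespace IsBasisReflection

variable {K S : Type*} [Field K] [DecidableEq S] [Finite S]
  {T : Module.End K (S → K)} {r : S} {c : S → K}

theorem apply_of_ne (h : IsBasisReflection T r c) (v : S → K) {s : S} (hs : s ≠ r) :
    T v s = v s := by
  have : LinearMap.proj s ∘ₗ T = LinearMap.proj s := by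
    ext t
    by_cases ht : r = t
    · subst ht; simp [h.1, hs]
    · simp [h.2 t ht, Pi.single_apply, hs]
  exact LinearMap.congr_fun this v

theorem eq_single_of_apply_eq_neg [NeZero (2 : K)] (h : IsBasisReflection T r c)
    {v : S → K} (hv : T v = -v) : v = Pi.single r (v r) := by
  funext s
  by_cases hs : s = r
  · subst hs; simp
  · have hvs := h.apply_of_ne v hs
    rw [hv, Pi.neg_apply] at hvs
    have : 2 * v s = 0 := by linear_combination -hvs
    simp [hs, (mul_eq_zero.1 this).resolve_left two_ne_zero]

theorem commute_lmul_iff (h : IsBasisReflection T r c) (μ : S → K) :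
    Commute T (Algebra.lmul K (S → K) μ) ↔ ∀ t, r ≠ t → c t ≠ 0 → μ r = μ t := by
  have mul_single (t : S) : μ * Pi.single t 1 = μ t • Pi.single t 1 := by
    simp [← Pi.single_mul_right, ← Pi.single_smul]
  constructor
  · intro hcomm t hrt hct
    have := congr_fun (LinearMap.congr_fun hcomm.eq (Pi.single t 1)) r
    simp [mul_single, h.2 t hrt, Ne.symm hrt] at this
    exact (this.resolve_right hct).symm
  · intro hμ
    ext t : 2
    simp only [LinearMap.comp_apply, LinearMap.single_apply, Module.End.mul_apply,
      Algebra.coe_lmul_eq_mul, LinearMap.mul_apply', mul_single, map_smul]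
    by_cases hrt : r = t
    · subst hrt; simp [h.1, mul_single]
    rw [h.2 t hrt]
    by_cases hct : c t = 0
    · simp [hct, mul_single]
    ext s
    by_cases hs : s = r
    · subst hs; simp [Ne.symm hrt, hμ t hrt hct, mul_comm]
    · by_cases hst : s = t
      · subst hst; simp [hs]
      · simp [hs, hst]

end IsBasisReflection

theorem eq_lmul_of_forall_commute {K S : Type*} [Field K] [NeZero (2 : K)] [DecidableEq S]
    [Finite S] {T : S → Module.End K (S → K)} {c : S → S → K}
    (hT : ∀ r, IsBasisReflection (T r) r (c r)) {f : Module.End K (S → K)}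
    (hf : ∀ r, Commute (T r) f) : f = Algebra.lmul K (S → K) fun r => f (Pi.single r 1) r := by
  ext t : 2
  have heig : T t (f (Pi.single t 1)) = -f (Pi.single t 1) := by
    rw [← Module.End.mul_apply, (hf t).eq, Module.End.mul_apply, (hT t).1, map_neg]
  simp only [LinearMap.comp_apply, LinearMap.single_apply, Algebra.coe_lmul_eq_mul,
    LinearMap.mul_apply']
  conv_lhs => rw [(hT t).eq_single_of_apply_eq_neg heig]
  rw [← Pi.single_mul_right, mul_one]

namespace SimpleGraph

variable {S : Type*}

theorem exists_comp_connectedComponentMk_eq_iff {β : Type*} (G : SimpleGraph S) (μ : S → β) :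
    (∃ g : G.ConnectedComponent → β, g ∘ G.connectedComponentMk = μ) ↔
      ∀ u v, G.Adj u v → μ u = μ v := by
  constructor
  · rintro ⟨g, rfl⟩ u v huv
    exact congrArg g (ConnectedComponent.sound huv.reachable)
  · intro h
    have walk_const {u v : S} (p : G.Walk u v) : μ u = μ v := by
      induction p with
      | nil => rfl
      | cons huv _ ih => exact (h _ _ huv).trans ih
    exact ⟨ConnectedComponent.lift μ fun _ _ p _ => walk_const p, rfl⟩

def componentDiagonal (K : Type*) [Field K] (G : SimpleGraph S) :
    (G.ConnectedComponent → K) →ₐ[K] Module.End K (S → K) :=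
  (Algebra.lmul K (S → K)).comp <|
    AlgHom.pi fun s => Pi.evalAlgHom K (fun _ => K) (G.connectedComponentMk s)

variable {K : Type*} [Field K]

theorem componentDiagonal_apply (G : SimpleGraph S) (g : G.ConnectedComponent → K) :
    G.componentDiagonal K g = Algebra.lmul K (S → K) (g ∘ G.connectedComponentMk) :=
  rfl

theorem componentDiagonal_injective (G : SimpleGraph S) :
    Function.Injective (G.componentDiagonal K) :=
  Algebra.lmul_injective.comp Quot.mk_surjective.injective_comp_right

end SimpleGraph

theorem centralizer_range_eq_range_componentDiagonal {K S : Type*} [Field K] [NeZero (2 : K)]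
    [DecidableEq S] [Finite S] {T : S → Module.End K (S → K)} {c : S → S → K}
    (hT : ∀ r, IsBasisReflection (T r) r (c r)) {G : SimpleGraph S}
    (hG : ∀ r t, r ≠ t → (G.Adj r t ↔ c r t ≠ 0)) :
    Subalgebra.centralizer K (Set.range T) = (G.componentDiagonal K).range := by
  have commute_iff (μ : S → K) :
      (∀ r, Commute (T r) (Algebra.lmul K (S → K) μ)) ↔ ∀ r t, G.Adj r t → μ r = μ t := by
    simp only [(hT _).commute_lmul_iff]
    exact ⟨fun h r t hrt => h r t hrt.ne ((hG r t hrt.ne).1 hrt),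
      fun h r t hrt hc => h r t ((hG r t hrt).2 hc)⟩
  ext f
  simp only [Subalgebra.mem_centralizer_iff, Set.forall_mem_range, AlgHom.mem_range,
    SimpleGraph.componentDiagonal_apply]
  constructor
  · intro hf
    have hf_eq := eq_lmul_of_forall_commute hT hf
    rw [hf_eq] at hf
    obtain ⟨g, hg⟩ := (G.exists_comp_connectedComponentMk_eq_iff _).2 ((commute_iff _).1 hf)
    exact ⟨g, hg ▸ hf_eq.symm⟩
  · rintro ⟨g, rfl⟩
    exact (commute_iff _).2 ((G.exists_comp_connectedComponentMk_eq_iff _).1 ⟨g, rfl⟩)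

theorem CoxeterSystem.centralizer_range_eq {B W : Type*} [Group W] {M : CoxeterMatrix B}
    (cs : CoxeterSystem M W) {R A : Type*} [CommSemiring R] [Semiring A] [Algebra R A]
    (φ : W →* A) :
    Subalgebra.centralizer R (Set.range φ) =
      Subalgebra.centralizer R (Set.range fun i => φ (cs.simple i)) := by
  ext f
  simp only [Subalgebra.mem_centralizer_iff, Set.forall_mem_range]
  refine ⟨fun h i => h _, fun h w => ?_⟩
  induction w using cs.simple_induction with
  | simple i => exact h i
  | one => simp
  | mul w₁ w₂ h₁ h₂ => rw [map_mul, mul_assoc, h₂, ← mul_assoc, h₁, mul_assoc]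

theorem Real.cos_nat_mul_pi_div_eq_zero_iff {k m : ℕ} (hm : m ≠ 0) (hkm : 2 * k ≤ m) :
    Real.cos (k * Real.pi / m) = 0 ↔ 2 * k = m := by
  have hm_pos : (0 : ℝ) < m := by positivity
  constructor
  · intro hcos
    by_contra hne
    have hlt : (2 * k : ℝ) < m := by exact_mod_cast lt_of_le_of_ne hkm hne
    have hθ : k * Real.pi / m < Real.pi / 2 := by
      rw [div_lt_div_iff₀ hm_pos two_pos]; nlinarith [Real.pi_pos]
    have hθ_nonneg : 0 ≤ k * Real.pi / m := by positivity
    exact (Real.cos_pos_of_mem_Ioo ⟨by linarith [Real.pi_pos], hθ⟩).ne' hcos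
  · intro h
    have hk : (k : ℝ) ≠ 0 := by norm_cast; omega
    rw [← h, Nat.cast_mul, Nat.cast_two,
      show (k : ℝ) * Real.pi / (2 * k) = Real.pi / 2 by field_simp]
    exact Real.cos_pi_div_two

theorem ir_rep_endomorphism_algebra_general {S : Type*} [Fintype S] [DecidableEq S]
    {W : Type*} [Group W] (M : CoxeterMatrix S) (cs : CoxeterSystem M W)
    (hfin : ∀ r t : S, M r t ≠ 0)
    (k : S → S → ℕ)
    (hk2 : ∀ r t : S, r ≠ t → 2 * k r t ≤ M r t)
    (a : S → S → ℂ) (ha : ∀ r t, a r t ≠ 0)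
    (α : S → (S → ℂ)) (hα : ∀ s, α s = Pi.single s 1)
    (ρ : Representation ℂ W (S → ℂ))
    (hneg : ∀ r : S, ρ (cs.simple r) (α r) = -α r)
    (hact : ∀ r t : S, r ≠ t → ρ (cs.simple r) (α t) =
      α t + (2 * (a r t / a t r) *
        ((Real.cos (k r t * Real.pi / (M r t)) : ℝ) : ℂ)) • α r)
    (Gt : SimpleGraph S)
    (hGt : ∀ r t : S, Gt.Adj r t ↔ r ≠ t ∧ 2 * k r t ≠ M r t)
    :
    Nonempty ((Subalgebra.centralizer ℂ
        (Set.range fun w : W => (ρ w : Module.End ℂ (S → ℂ)))) ≃ₐ[ℂ]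
      (Gt.ConnectedComponent → ℂ)) := by
  obtain rfl : α = fun s => Pi.single s 1 := funext hα
  set c : S → S → ℂ := fun r t =>
    2 * (a r t / a t r) * ((Real.cos (k r t * Real.pi / (M r t)) : ℝ) : ℂ)
  have hT : ∀ r, IsBasisReflection (ρ (cs.simple r)) r (c r) := fun r => ⟨hneg r, hact r⟩
  have hG : ∀ r t, r ≠ t → (Gt.Adj r t ↔ c r t ≠ 0) := by
    intro r t hrt
    simp only [hGt, c, ne_eq, hrt, not_false_eq_true, true_and, mul_eq_zero, two_ne_zero,
      div_eq_zero_iff, ha, or_self, false_or, Complex.ofReal_eq_zero,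
      Real.cos_nat_mul_pi_div_eq_zero_iff (hfin r t) (hk2 r t hrt)]
  rw [cs.centralizer_range_eq, centralizer_range_eq_range_componentDiagonal hT hG]
  exact ⟨(AlgEquiv.ofInjective _ Gt.componentDiagonal_injective).symm⟩

/-- For an IR-representation `V = ⊕ ℂα_s`, the algebra of `W`-equivariant
endomorphisms of `V` is isomorphic to `ℂ^g`, where `g` is the number of connected
components of the associated graph `G̃`. -/
theorem ir_rep_endomorphism_algebra {S : Type*} [Fintype S] [DecidableEq S]
    {W : Type*} [Group W] (M : CoxeterMatrix S) (cs : CoxeterSystem M W)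
    (hfin : ∀ r t : S, M r t ≠ 0)
    (k : S → S → ℕ) (hsym : ∀ r t, k r t = k t r)
    (hk1 : ∀ r t : S, r ≠ t → 1 ≤ k r t) (hk2 : ∀ r t : S, r ≠ t → 2 * k r t ≤ M r t)
    (a : S → S → ℂ) (ha : ∀ r t, a r t ≠ 0)
    (α : S → (S → ℂ)) (hα : ∀ s, α s = Pi.single s 1)
    (ρ : Representation ℂ W (S → ℂ))
    (hneg : ∀ r : S, ρ (cs.simple r) (α r) = -α r)
    (hact : ∀ r t : S, r ≠ t → ρ (cs.simple r) (α t) =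
      α t + (2 * (a r t / a t r) *
        ((Real.cos (k r t * Real.pi / (M r t)) : ℝ) : ℂ)) • α r)
    (Gt : SimpleGraph S)
    (hGt : ∀ r t : S, Gt.Adj r t ↔ r ≠ t ∧ 2 * k r t ≠ M r t)
    :
    Nonempty ((Subalgebra.centralizer ℂ
        (Set.range fun w : W => (ρ w : Module.End ℂ (S → ℂ)))) ≃ₐ[ℂ]
      (Gt.ConnectedComponent → ℂ)) :=
  ir_rep_endomorphism_algebra_general M cs hfin k hk2 a ha α hα ρ hneg hact Gt hGt
end

section
/- For n ≥ 1 and x ∈ ℂ×, let A(x) be the (n+1)×(n+1) matrix with diagonal entries 1, entries -1/2 in positions (i,i+1) and (i+1,i) for 1 ≤ i ≤ n, entry -x/2 in position (1, n+1), entry -1/(2x) in position (n+1, 1), and 0 elsewhere. Then det A(x) = (2 - x - x⁻¹)/2^{n+1}. -/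
open Matrix



/-- Twisted shift: superdiagonal of `1`s and `a` in the lower-left corner. -/
def affSm (n : ℕ) (a : ℂ) : Matrix (Fin (n+1)) (Fin (n+1)) ℂ :=
  Matrix.of fun i j =>
    if (j : ℕ) = (i : ℕ) + 1 then 1 else if (i : ℕ) = n ∧ (j : ℕ) = 0 then a else 0

lemma det_one_sub_affSm (n : ℕ) (hn : 1 ≤ n) (a : ℂ) :
    (1 - affSm n a).det = 1 - a := by
  rw [Matrix.det_succ_column_zero]
  set f : Fin (n+1) → ℂ := fun i =>
    (-1)^(i:ℕ) * (1 - affSm n a) i 0 * det ((1 - affSm n a).submatrix i.succAbove Fin.succ)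
    with hf
  have hsub : ({0, Fin.last n} : Finset (Fin (n+1))) ⊆ Finset.univ := Finset.subset_univ _
  have hzero : ∀ i ∈ Finset.univ, i ∉ ({0, Fin.last n} : Finset (Fin (n+1))) → f i = 0 := by
    intro i _ hi
    simp only [Finset.mem_insert, Finset.mem_singleton, not_or] at hi
    obtain ⟨h0, hl⟩ := hi
    have h0' : (i : ℕ) ≠ 0 := fun h => h0 (Fin.ext h)
    have hl' : (i : ℕ) ≠ n := fun h => hl (Fin.ext (by simp [h, Fin.val_last]))
    have hent : (1 - affSm n a) i 0 = 0 := by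
      simp only [Matrix.sub_apply, Matrix.one_apply, affSm, Matrix.of_apply, Fin.val_zero]
      have hne : ¬ i = 0 := h0
      rw [if_neg hne, if_neg (by omega), if_neg (by omega)]
      ring
    rw [hf]; dsimp only; rw [hent, mul_zero, zero_mul]
  have hne : (0 : Fin (n+1)) ≠ Fin.last n := by
    intro h
    have := congrArg Fin.val h
    simp only [Fin.val_zero, Fin.val_last] at this
    omega
  rw [← Finset.sum_subset hsub hzero, Finset.sum_pair hne]
  have e1 : (1 - affSm n a) 0 0 = 1 := by
    simp only [Matrix.sub_apply, Matrix.one_apply, affSm, Matrix.of_apply, Fin.val_zero]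
    rw [if_pos trivial, if_neg (by omega)]
    rw [if_neg (fun h => by omega)]
    ring
  have e2 : (1 - affSm n a) (Fin.last n) 0 = -a := by
    simp only [Matrix.sub_apply, Matrix.one_apply, affSm, Matrix.of_apply, Fin.val_zero,
      Fin.val_last]
    have hne' : ¬ (Fin.last n) = 0 := by
      intro h; have := congrArg Fin.val h
      simp only [Fin.val_last, Fin.val_zero] at this; omega
    rw [if_neg hne', if_neg (by omega), if_pos (by simp)]
    ring
  have d1 : det ((1 - affSm n a).submatrix (0 : Fin (n+1)).succAbove Fin.succ) = 1 := by
    rw [Fin.succAbove_zero]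
    rw [Matrix.det_of_upperTriangular]
    · apply Finset.prod_eq_one
      intro i _
      simp only [Matrix.submatrix_apply, Matrix.sub_apply, Matrix.one_apply, affSm,
        Matrix.of_apply, Fin.val_succ]
      rw [if_pos trivial, if_neg (by omega), if_neg (fun h => by omega)]
      ring
    · intro i j hij
      simp only [id] at hij
      simp only [Matrix.submatrix_apply, Matrix.sub_apply, Matrix.one_apply, affSm,
        Matrix.of_apply, Fin.val_succ]
      have : ¬ i.succ = j.succ := by
        intro h; exact absurd (Fin.succ_injective _ h) (ne_of_gt hij)
      rw [if_neg this, if_neg (by omega), if_neg (by omega)]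
      ring
  have d2 : det ((1 - affSm n a).submatrix (Fin.last n).succAbove Fin.succ) = (-1)^n := by
    rw [Fin.succAbove_last]
    rw [Matrix.det_of_lowerTriangular]
    · rw [Finset.prod_congr rfl (g := fun _ => (-1 : ℂ)) ?_, Finset.prod_const]
      · simp
      · intro i _
        simp only [Matrix.submatrix_apply, Matrix.sub_apply, Matrix.one_apply, affSm,
          Matrix.of_apply, Fin.val_succ, Fin.coe_castSucc]
        have : ¬ i.castSucc = i.succ := by
          intro h; have := congrArg Fin.val h
          simp only [Fin.coe_castSucc, Fin.val_succ] at this; omega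
        rw [if_neg this, if_pos trivial]
        ring
    · intro i j hij
      simp only [OrderDual.toDual_lt_toDual] at hij
      simp only [Matrix.submatrix_apply, Matrix.sub_apply, Matrix.one_apply, affSm,
        Matrix.of_apply, Fin.val_succ, Fin.coe_castSucc]
      have : ¬ i.castSucc = j.succ := by
        intro h; have := congrArg Fin.val h
        simp only [Fin.coe_castSucc, Fin.val_succ] at this
        have := hij; omega
      rw [if_neg this, if_neg (by have := hij; omega), if_neg (by omega)]
      ring
  rw [hf]; dsimp only
  rw [e1, e2, d1, d2, Fin.val_zero, Fin.val_last]
  have : (-1 : ℂ)^n * (-1)^n = 1 := by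
    rw [← pow_add]
    exact Even.neg_one_pow ⟨n, rfl⟩
  rw [pow_zero,
    show ((-1:ℂ))^n * (-a) * (-1)^n = ((-1:ℂ)^n * (-1)^n) * (-a) by ring, this]
  ring


lemma affSm_mul_transpose (n : ℕ) (x : ℂ) (hx : x ≠ 0) :
    affSm n x⁻¹ * (affSm n x)ᵀ = 1 := by
  ext i j
  rw [Matrix.mul_apply]
  have hi : (i : ℕ) ≤ n := Fin.is_le i
  have hj : (j : ℕ) ≤ n := Fin.is_le j
  by_cases hij : i = j
  · subst hij
    rw [Matrix.one_apply_eq]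
    by_cases hin : (i : ℕ) = n
    · rw [Finset.sum_eq_single (0 : Fin (n+1))]
      · simp only [affSm, Matrix.transpose_apply, Matrix.of_apply, Fin.val_zero]
        rw [if_neg (by omega), if_pos (by simp [hin]), if_neg (by omega), if_pos (by simp [hin])]
        exact inv_mul_cancel₀ hx
      · intro k _ hk
        have hk' : (k : ℕ) ≠ 0 := fun h => hk (Fin.ext h)
        have hkle : (k : ℕ) ≤ n := Fin.is_le k
        simp only [affSm, Matrix.transpose_apply, Matrix.of_apply]
        rw [if_neg (by omega), if_neg (by omega)]
        ring
      · intro h; exact absurd (Finset.mem_univ _) h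
    · have hilt : (i : ℕ) < n := lt_of_le_of_ne hi hin
      rw [Finset.sum_eq_single (⟨(i : ℕ) + 1, by omega⟩ : Fin (n+1))]
      · simp only [affSm, Matrix.transpose_apply, Matrix.of_apply]
        rw [if_pos trivial, if_pos trivial]
        ring
      · intro k _ hk
        have hk' : (k : ℕ) ≠ (i : ℕ) + 1 := fun h => hk (Fin.ext h)
        simp only [affSm, Matrix.transpose_apply, Matrix.of_apply]
        rw [if_neg (by omega), if_neg (by omega)]
        ring
      · intro h; exact absurd (Finset.mem_univ _) h
  · rw [Matrix.one_apply_ne hij]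
    apply Finset.sum_eq_zero
    intro k _
    have hij' : (i : ℕ) ≠ (j : ℕ) := fun h => hij (Fin.ext h)
    have hk : (k : ℕ) ≤ n := Fin.is_le k
    simp only [affSm, Matrix.transpose_apply, Matrix.of_apply]
    split_ifs <;> first | ring1 | (exfalso; omega)


/-- For `n ≥ 1` and `x ∈ ℂ×`, the `(n+1)×(n+1)` matrix with `1` on the diagonal,
`-1/2` on the sub- and super-diagonal, `-x/2` in the upper-right corner and
`-1/(2x)` in the lower-left corner has determinant `(2 - x - x⁻¹)/2^{n+1}`. -/
theorem det_affine_An_matrix (n : ℕ) (hn : 1 ≤ n) (x : ℂ) (hx : x ≠ 0)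
    (A : Matrix (Fin (n + 1)) (Fin (n + 1)) ℂ)
    (hA : ∀ i j : Fin (n + 1), A i j =
      (if i = j then 1 else 0) +
      (if (j : ℕ) = (i : ℕ) + 1 ∨ (i : ℕ) = (j : ℕ) + 1 then -(1 / 2) else 0) +
      (if (i : ℕ) = 0 ∧ (j : ℕ) = n then -(x / 2) else 0) +
      (if (i : ℕ) = n ∧ (j : ℕ) = 0 then -(1 / (2 * x)) else 0)) :
    A.det = (2 - x - x⁻¹) / 2 ^ (n + 1) := by
  have aux : 1 - affSm n x⁻¹ - ((affSm n x)ᵀ - 1) = (2 : ℂ) • A := by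
    ext i j
    have hi : (i : ℕ) ≤ n := Fin.is_le i
    have hj : (j : ℕ) ≤ n := Fin.is_le j
    simp only [Matrix.sub_apply, Matrix.smul_apply, Matrix.one_apply, hA, affSm,
      Matrix.transpose_apply, Matrix.of_apply, smul_eq_mul, Fin.ext_iff, Fin.val_zero]
    split_ifs <;> first | ring1 | (exfalso; omega)
  have key : (1 - affSm n x⁻¹) * (1 - (affSm n x)ᵀ) = (2 : ℂ) • A := by
    simp only [Matrix.mul_sub, Matrix.sub_mul, Matrix.mul_one, Matrix.one_mul,
      affSm_mul_transpose n x hx]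
    exact aux
  have hdet : ((1 - affSm n x⁻¹) * (1 - (affSm n x)ᵀ)).det = (1 - x⁻¹) * (1 - x) := by
    rw [Matrix.det_mul, det_one_sub_affSm n hn x⁻¹,
      show (1 : Matrix (Fin (n+1)) (Fin (n+1)) ℂ) - (affSm n x)ᵀ = (1 - affSm n x)ᵀ by
        rw [Matrix.transpose_sub, Matrix.transpose_one],
      Matrix.det_transpose, det_one_sub_affSm n hn x]
  rw [key] at hdet
  rw [Matrix.det_smul, Fintype.card_fin] at hdet
  have h2 : ((2 : ℂ) ^ (n + 1)) ≠ 0 := pow_ne_zero _ two_ne_zero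
  field_simp at hdet ⊢
  linear_combination hdet
end

section
/- Let (W,S) be the affine Coxeter group of type Ã_n with generators s_0, ..., s_n. For x ∈ ℂ×, the IR-representation V_x (defined by the data with all k_{ij} = 1 and the circuit character value x) is irreducible if and only if x ≠ 1. -/
section Aux

/-- Kernel lemma: if `v` satisfies the relations `A(x) v = 0` and `x ≠ 0, 1`, then `v = 0`. -/
lemma affine_An_kernel (n : ℕ) (hn : 2 ≤ n) (x : ℂ) (hx : x ≠ 0) (hx1 : x ≠ 1)
    (v : ZMod (n + 1) → ℂ)
    (hv : ∀ i : ZMod (n + 1), 2 * v i =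
      (if i + 1 = 0 then x⁻¹ else 1) * v (i + 1) + (if i = 0 then x else 1) * v (i - 1)) :
    v = 0 := by
  have hcast : ∀ a : ℕ, a < n + 1 → ((a : ZMod (n + 1)) = 0 ↔ a = 0) := by
    intro a ha
    rw [ZMod.natCast_eq_zero_iff]
    exact ⟨fun h => Nat.eq_zero_of_dvd_of_lt h ha, fun h => h ▸ (dvd_zero _)⟩
  have h1ne : (1 : ZMod (n + 1)) ≠ 0 := by
    have := hcast 1 (by omega)
    simpa using fun h => by simpa using this.mp (by exact_mod_cast h)
  set d : ℂ := v 1 - v 0 with hd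
  -- arithmetic progression on 0..n
  have key : ∀ k : ℕ, k ≤ n → v ((k : ℕ) : ZMod (n + 1)) = v 0 + (k : ℂ) * d := by
    intro k
    induction k using Nat.strong_induction_on with
    | _ k ih =>
      match k with
      | 0 => intro _; simp
      | 1 => intro _; simp [hd]
      | (m + 2) =>
        intro hk
        have h1 : ((m + 1 : ℕ) : ZMod (n + 1)) ≠ 0 := by
          intro h; have := (hcast (m + 1) (by omega)).mp h; omega
        have h2 : ((m + 1 : ℕ) : ZMod (n + 1)) + 1 ≠ 0 := by
          intro h
          have : ((m + 2 : ℕ) : ZMod (n + 1)) = 0 := by push_cast; push_cast at h; linear_combination h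
          have := (hcast (m + 2) (by omega)).mp this; omega
        have heq := hv ((m + 1 : ℕ) : ZMod (n + 1))
        rw [if_neg h2, if_neg h1] at heq
        have e1 : ((m + 1 : ℕ) : ZMod (n + 1)) + 1 = ((m + 2 : ℕ) : ZMod (n + 1)) := by push_cast; ring
        have e2 : ((m + 1 : ℕ) : ZMod (n + 1)) - 1 = ((m : ℕ) : ZMod (n + 1)) := by push_cast; ring
        rw [e1, e2] at heq
        have vm := ih m (by omega) (by omega)
        have vm1 := ih (m + 1) (by omega) (by omega)
        rw [vm, vm1] at heq
        push_cast
        push_cast at heq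
        linear_combination -heq
  -- boundary equation at i = 0
  have hvn : v (0 - 1 : ZMod (n + 1)) = v 0 + (n : ℂ) * d := by
    have e : (0 - 1 : ZMod (n + 1)) = ((n : ℕ) : ZMod (n + 1)) := by
      have : ((n + 1 : ℕ) : ZMod (n + 1)) = 0 := by exact_mod_cast ZMod.natCast_self (n + 1)
      push_cast at this ⊢
      linear_combination -this
    rw [e]; exact key n le_rfl
  have hv1 : v (0 + 1 : ZMod (n + 1)) = v 0 + d := by
    have e : (0 + 1 : ZMod (n + 1)) = ((1 : ℕ) : ZMod (n + 1)) := by push_cast; ring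
    rw [e]
    have := key 1 (by omega); rw [this]; push_cast; ring
  have eqA : 2 * v 0 = (v 0 + d) + x * (v 0 + (n : ℂ) * d) := by
    have heq := hv 0
    rw [if_neg (by simpa using h1ne), if_pos rfl, hvn, hv1] at heq
    linear_combination heq
  -- boundary equation at i = n
  have hne0 : ((n : ℕ) : ZMod (n + 1)) ≠ 0 := by
    intro h; have := (hcast n (by omega)).mp h; omega
  have hplus : ((n : ℕ) : ZMod (n + 1)) + 1 = 0 := by
    have : ((n + 1 : ℕ) : ZMod (n + 1)) = 0 := by exact_mod_cast ZMod.natCast_self (n + 1)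
    push_cast at this ⊢; linear_combination this
  have eqB : 2 * (v 0 + (n : ℂ) * d) = x⁻¹ * v 0 + (v 0 + ((n : ℂ) - 1) * d) := by
    have heq := hv ((n : ℕ) : ZMod (n + 1))
    rw [if_pos hplus, if_neg hne0, hplus] at heq
    have e2 : ((n : ℕ) : ZMod (n + 1)) - 1 = ((n - 1 : ℕ) : ZMod (n + 1)) := by
      have : ((n - 1 : ℕ) : ZMod (n + 1)) + 1 = ((n : ℕ) : ZMod (n + 1)) := by
        have : n - 1 + 1 = n := by omega
        exact_mod_cast congrArg (fun a : ℕ => ((a : ZMod (n + 1)))) this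
      linear_combination -this
    rw [e2] at heq
    have vnm := key (n - 1) (by omega)
    have hc : ((n - 1 : ℕ) : ℂ) = (n : ℂ) - 1 := by
      have : (1:ℕ) ≤ n := by omega
      push_cast [this]; ring
    rw [vnm, hc, key n le_rfl] at heq
    linear_combination heq
  -- solve
  have eqB' : v 0 * (x - 1) = -((n : ℂ) + 1) * x * d := by
    linear_combination x * eqB + v 0 * mul_inv_cancel₀ hx
  have hdz : d = 0 := by
    have hfin : d * (1 - x) = 0 := by linear_combination -eqA - eqB'
    rcases mul_eq_zero.mp hfin with h | h
    · exact h
    · exact absurd (by linear_combination -h) hx1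
  have hv0 : v 0 = 0 := by
    have : v 0 * (1 - x) = 0 := by rw [hdz] at eqA; linear_combination eqA
    rcases mul_eq_zero.mp this with h | h
    · exact h
    · exact absurd (by linear_combination -h) hx1
  funext i
  have hval : i = ((i.val : ℕ) : ZMod (n + 1)) := by
    rw [ZMod.natCast_val, ZMod.cast_id]
  have hle : i.val ≤ n := by have := ZMod.val_lt i; omega
  rw [hval, key i.val hle, hv0, hdz]
  simp

end Aux

/-- For the affine Coxeter group of type `Ã_n` (generators `s_0, …, s_n`, indices mod
`n+1`), the IR-representation `V_x` attached to `x ∈ ℂ×` (all `k_{ij} = 1`, circuit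
character value `x`) is irreducible iff `x ≠ 1`. -/
theorem affine_An_Vx_irreducible_iff (n : ℕ) (hn : 2 ≤ n)
    {W : Type*} [Group W] (M : CoxeterMatrix (ZMod (n + 1)))
    (hM : ∀ i j : ZMod (n + 1), M i j =
      if i = j then 1 else if j = i + 1 ∨ i = j + 1 then 3 else 2)
    (cs : CoxeterSystem M W) (x : ℂ) (hx : x ≠ 0)
    (α : ZMod (n + 1) → (ZMod (n + 1) → ℂ)) (hα : ∀ i, α i = Pi.single i 1)
    (ρ : Representation ℂ W (ZMod (n + 1) → ℂ))
    (hneg : ∀ i, ρ (cs.simple i) (α i) = -α i)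
    (hsucc : ∀ i, ρ (cs.simple i) (α (i + 1)) =
      α (i + 1) + (if i + 1 = 0 then x⁻¹ else 1) • α i)
    (hpred : ∀ i, ρ (cs.simple i) (α (i - 1)) =
      α (i - 1) + (if i = 0 then x else 1) • α i)
    (hfar : ∀ i j : ZMod (n + 1), j ≠ i → j ≠ i + 1 → j ≠ i - 1 →
      ρ (cs.simple i) (α j) = α j) :
    (∀ p : Submodule ℂ (ZMod (n + 1) → ℂ), (∀ w : W, ∀ v ∈ p, ρ w v ∈ p) →
      p = ⊥ ∨ p = ⊤) ↔ x ≠ 1 := by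
  classical
  have h1ne : (1 : ZMod (n + 1)) ≠ 0 := by
    have : ((1 : ℕ) : ZMod (n + 1)) ≠ 0 := by
      intro h
      rw [ZMod.natCast_eq_zero_iff] at h
      have := Nat.le_of_dvd one_pos h; omega
    simpa using this
  have h2ne : (2 : ZMod (n + 1)) ≠ 0 := by
    have : ((2 : ℕ) : ZMod (n + 1)) ≠ 0 := by
      intro h
      rw [ZMod.natCast_eq_zero_iff] at h
      have := Nat.le_of_dvd two_pos h; omega
    simpa using this
  have hact : ∀ (i : ZMod (n + 1)) (v : ZMod (n + 1) → ℂ), ρ (cs.simple i) v =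
      v - (2 * v i - (if i + 1 = 0 then x⁻¹ else 1) * v (i + 1)
        - (if i = 0 then x else 1) * v (i - 1)) • α i := by
    intro i
    have hii1 : i + 1 ≠ i := fun h => h1ne (by linear_combination h)
    have hii2 : i - 1 ≠ i := fun h => h1ne (by linear_combination -h)
    have hii3 : i + 1 ≠ i - 1 := fun h => h2ne (by linear_combination h)
    have hL : ρ (cs.simple i) = LinearMap.id -
        LinearMap.smulRight ((2 : ℂ) • (LinearMap.proj i : ((ZMod (n + 1)) → ℂ) →ₗ[ℂ] ℂ)
          - (if i + 1 = 0 then x⁻¹ else 1) • LinearMap.proj (i + 1)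
          - (if i = 0 then x else 1) • LinearMap.proj (i - 1)) (α i) := by
      apply (Pi.basisFun ℂ (ZMod (n + 1))).ext
      intro j
      rw [Pi.basisFun_apply, show Pi.single j (1 : ℂ) = α j from (hα j).symm]
      by_cases hji : j = i
      · subst hji
        rw [hneg]
        simp only [LinearMap.sub_apply, LinearMap.id_apply, LinearMap.smulRight_apply,
          LinearMap.smul_apply, LinearMap.proj_apply, smul_eq_mul, hα, Pi.single_apply,
          hii1, hii2, if_false, if_true, mul_zero, mul_one, sub_zero]
        module
      · by_cases hji1 : j = i + 1
        · subst hji1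
          rw [hsucc]
          simp only [LinearMap.sub_apply, LinearMap.id_apply, LinearMap.smulRight_apply,
            LinearMap.smul_apply, LinearMap.proj_apply, smul_eq_mul, hα, Pi.single_apply,
            if_true, mul_zero, mul_one,
            if_neg (fun h : i = i + 1 => hii1 h.symm),
            if_neg (fun h : i - 1 = i + 1 => hii3 h.symm)]
          module
        · by_cases hji2 : j = i - 1
          · subst hji2
            rw [hpred]
            simp only [LinearMap.sub_apply, LinearMap.id_apply, LinearMap.smulRight_apply,
              LinearMap.smul_apply, LinearMap.proj_apply, smul_eq_mul, hα, Pi.single_apply,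
              if_true, mul_zero, mul_one,
              if_neg (fun h : i = i - 1 => hii2 h.symm),
              if_neg (fun h : i + 1 = i - 1 => hii3 h)]
            module
          · rw [hfar i j hji hji1 hji2]
            simp only [LinearMap.sub_apply, LinearMap.id_apply, LinearMap.smulRight_apply,
              LinearMap.smul_apply, LinearMap.proj_apply, smul_eq_mul, hα, Pi.single_apply,
              if_neg (fun h : i = j => hji h.symm),
              if_neg (fun h : i + 1 = j => hji1 h.symm),
              if_neg (fun h : i - 1 = j => hji2 h.symm), mul_zero, mul_one]
            module
    intro v
    rw [hL]
    simp only [LinearMap.sub_apply, LinearMap.id_apply, LinearMap.smulRight_apply,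
      LinearMap.smul_apply, LinearMap.proj_apply, smul_eq_mul]
  have hdec : ∀ v : ZMod (n + 1) → ℂ, v = ∑ j, v j • α j := by
    intro v
    funext k
    rw [Finset.sum_apply]
    simp [hα, Pi.single_apply]
  constructor
  · intro hirr hx1
    set δ : ZMod (n + 1) → ℂ := fun _ => 1 with hδ
    have hδfix : ∀ w : W, ρ w δ = δ := by
      intro w
      induction w using cs.simple_induction with
      | simple i =>
        rw [hact i δ]
        have h0 : (2 * δ i - (if i + 1 = 0 then x⁻¹ else 1) * δ (i + 1)
            - (if i = 0 then x else 1) * δ (i - 1)) = 0 := by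
          simp only [hδ]
          split_ifs <;> norm_num [hx1]
        rw [h0, zero_smul, sub_zero]
      | one => simp
      | mul w1 w2 h1 h2 => rw [map_mul, Module.End.mul_apply, h2, h1]
    have hinv : ∀ w : W, ∀ v ∈ Submodule.span ℂ {δ}, ρ w v ∈ Submodule.span ℂ {δ} := by
      intro w v hv
      obtain ⟨c, rfl⟩ := Submodule.mem_span_singleton.mp hv
      rw [map_smul, hδfix]
      exact Submodule.smul_mem _ _ (Submodule.mem_span_singleton_self δ)
    rcases hirr _ hinv with h | h
    · have : δ ∈ (⊥ : Submodule ℂ (ZMod (n + 1) → ℂ)) :=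
        h ▸ Submodule.mem_span_singleton_self δ
      rw [Submodule.mem_bot] at this
      have := congrFun this 0
      simp [hδ] at this
    · have : α 0 ∈ Submodule.span ℂ {δ} := h ▸ Submodule.mem_top
      obtain ⟨c, hc⟩ := Submodule.mem_span_singleton.mp this
      have e0 := congrFun hc 0
      have e1 := congrFun hc 1
      simp [hδ, hα, Pi.single_apply] at e0 e1
      rw [if_neg h1ne] at e1
      simp [e0] at e1
  · intro hx1 p hp
    by_cases hcase : ∀ v ∈ p, ∀ i : ZMod (n + 1), (2 * v i
        - (if i + 1 = 0 then x⁻¹ else 1) * v (i + 1)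
        - (if i = 0 then x else 1) * v (i - 1)) = 0
    · left
      rw [Submodule.eq_bot_iff]
      intro v hv
      apply affine_An_kernel n hn x hx hx1 v
      intro i
      have := hcase v hv i
      linear_combination this
    · right
      push_neg at hcase
      obtain ⟨v, hv, i, hfi⟩ := hcase
      have hαi : α i ∈ p := by
        have h1 : v - ρ (cs.simple i) v ∈ p := Submodule.sub_mem _ hv (hp _ v hv)
        rw [hact i v] at h1
        have h2 : (2 * v i - (if i + 1 = 0 then x⁻¹ else 1) * v (i + 1)
            - (if i = 0 then x else 1) * v (i - 1)) • α i ∈ p := by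
          simpa using h1
        have h3 := Submodule.smul_mem p (2 * v i - (if i + 1 = 0 then x⁻¹ else 1) * v (i + 1)
            - (if i = 0 then x else 1) * v (i - 1))⁻¹ h2
        rwa [smul_smul, inv_mul_cancel₀ hfi, one_smul] at h3
      have hstep : ∀ j : ZMod (n + 1), α j ∈ p → α (j + 1) ∈ p := by
        intro j hj
        have hc : (if j + 1 = 0 then x else 1) ≠ 0 := by
          split_ifs
          · exact hx
          · exact one_ne_zero
        have h1 := hpred (j + 1)
        rw [show j + 1 - 1 = j from by ring] at h1
        have h2 : (if j + 1 = 0 then x else 1) • α (j + 1) ∈ p := by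
          have := Submodule.sub_mem p (hp (cs.simple (j + 1)) _ hj) hj
          rw [h1] at this
          simpa using this
        have h3 := Submodule.smul_mem p (if j + 1 = 0 then x else 1)⁻¹ h2
        rwa [smul_smul, inv_mul_cancel₀ hc, one_smul] at h3
      have hiter : ∀ k : ℕ, α (i + (k : ZMod (n + 1))) ∈ p := by
        intro k
        induction k with
        | zero => simpa using hαi
        | succ m ih =>
          have := hstep _ ih
          rw [show i + ((m : ℕ) : ZMod (n + 1)) + 1 = i + (((m + 1 : ℕ)) : ZMod (n + 1)) from by
            push_cast; ring] at this
          exact this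
      have hall : ∀ j : ZMod (n + 1), α j ∈ p := by
        intro j
        have e : j = i + (((j - i).val : ℕ) : ZMod (n + 1)) := by
          rw [ZMod.natCast_val, ZMod.cast_id]; ring
        rw [e]
        exact hiter _
      rw [eq_top_iff]
      rintro v -
      rw [hdec v]
      exact Submodule.sum_mem _ (fun j _ => Submodule.smul_mem _ _ (hall j))
end

section
/- Let V = ⊕_{s∈S} ℂα_s be an IR-representation of a finite-rank Coxeter system (W,S) with all m_{rt} < ∞, defined by data (k_{rt}, a_r^t), with connected associated graph G̃ and character χ of H₁(G̃). If V admits a nonzero W-invariant bilinear form B, then χ(H₁(G̃)) ⊆ {±1}; moreover B is symmetric, B(α_s,α_s) ≠ 0 for all s, and B is unique up to a ℂ×-scalar. -/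
/-- If an IR-representation with connected associated graph `G̃` admits a nonzero
`W`-invariant bilinear form `B`, then the character `χ` of `H₁(G̃)` (sending a closed
walk to `∏ a_{s_{i+1}}^{s_i}/a_{s_i}^{s_{i+1}}`) takes values in `{±1}`; moreover `B`
is symmetric, `B(α_s,α_s) ≠ 0` for all `s`, and `B` is unique up to a scalar. -/
theorem ir_rep_invariant_bilinear_form {S : Type*} [Fintype S] [DecidableEq S]
    {W : Type*} [Group W] (M : CoxeterMatrix S) (cs : CoxeterSystem M W)
    (hfin : ∀ r t : S, M r t ≠ 0)
    (k : S → S → ℕ) (hsym : ∀ r t, k r t = k t r)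
    (hk1 : ∀ r t : S, r ≠ t → 1 ≤ k r t) (hk2 : ∀ r t : S, r ≠ t → 2 * k r t ≤ M r t)
    (a : S → S → ℂ) (ha : ∀ r t, a r t ≠ 0)
    (α : S → (S → ℂ)) (hα : ∀ s, α s = Pi.single s 1)
    (ρ : Representation ℂ W (S → ℂ))
    (hneg : ∀ r : S, ρ (cs.simple r) (α r) = -α r)
    (hact : ∀ r t : S, r ≠ t → ρ (cs.simple r) (α t) =
      α t + (2 * (a r t / a t r) *
        ((Real.cos (k r t * Real.pi / (M r t)) : ℝ) : ℂ)) • α r)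
    (Gt : SimpleGraph S)
    (hGt : ∀ r t : S, Gt.Adj r t ↔ r ≠ t ∧ 2 * k r t ≠ M r t)
    (hconn : Gt.Connected)
    (B : (S → ℂ) →ₗ[ℂ] (S → ℂ) →ₗ[ℂ] ℂ) (hBne : B ≠ 0)
    (hBinv : ∀ (w : W) (u v : S → ℂ), B (ρ w u) (ρ w v) = B u v) :
    -- the character χ of H₁(G̃) takes values in {±1}
    (∀ (u : S) (p : Gt.Walk u u),
      (p.darts.map fun d => a d.toProd.2 d.toProd.1 / a d.toProd.1 d.toProd.2).prod = 1 ∨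
      (p.darts.map fun d => a d.toProd.2 d.toProd.1 / a d.toProd.1 d.toProd.2).prod = -1) ∧
    -- B is symmetric
    (∀ u v : S → ℂ, B u v = B v u) ∧
    -- B(α_s, α_s) ≠ 0
    (∀ s : S, B (α s) (α s) ≠ 0) ∧
    -- B is unique up to a scalar
    (∀ B' : (S → ℂ) →ₗ[ℂ] (S → ℂ) →ₗ[ℂ] ℂ,
      (∀ (w : W) (u v : S → ℂ), B' (ρ w u) (ρ w v) = B' u v) → ∃ c : ℂ, B' = c • B) := by
  -- abbreviations
  set C : S → S → ℂ := fun r t => 2 * (a r t / a t r) *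
      ((Real.cos (k r t * Real.pi / (M r t)) : ℝ) : ℂ) with hC
  -- the cosine is nonzero on edges of `G̃`
  have hcos : ∀ r t : S, Gt.Adj r t →
      (((Real.cos (k r t * Real.pi / (M r t)) : ℝ) : ℂ)) ≠ 0 := by
    intro r t h
    obtain ⟨hne, hk⟩ := (hGt r t).1 h
    have hM : 0 < (M r t : ℝ) := by
      exact_mod_cast Nat.pos_of_ne_zero (hfin r t)
    have hk1' : (1 : ℝ) ≤ (k r t : ℝ) := by exact_mod_cast hk1 r t hne
    have hlt : (2 * k r t : ℝ) < (M r t : ℝ) := by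
      exact_mod_cast lt_of_le_of_ne (hk2 r t hne) hk
    have hpi := Real.pi_pos
    have h0 : 0 ≤ (k r t : ℝ) * Real.pi / (M r t) := by positivity
    have h1 : -(Real.pi / 2) < (k r t : ℝ) * Real.pi / (M r t) := by linarith
    have h2 : (k r t : ℝ) * Real.pi / (M r t) < Real.pi / 2 := by
      rw [div_lt_div_iff₀ hM (by norm_num : (0:ℝ) < 2)]
      push_cast at hlt ⊢
      nlinarith
    have := Real.cos_pos_of_mem_Ioo ⟨h1, h2⟩
    exact Complex.ofReal_ne_zero.2 this.ne'
  have hCne : ∀ r t : S, Gt.Adj r t → C r t ≠ 0 := by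
    intro r t h
    have hne := ((hGt r t).1 h).1
    simp only [hC]
    exact mul_ne_zero (mul_ne_zero two_ne_zero (div_ne_zero (ha r t) (ha t r))) (hcos r t h)
  -- key relations from invariance
  have key : ∀ (B₀ : (S → ℂ) →ₗ[ℂ] (S → ℂ) →ₗ[ℂ] ℂ),
      (∀ (w : W) (u v : S → ℂ), B₀ (ρ w u) (ρ w v) = B₀ u v) →
      ∀ r t : S, r ≠ t → 2 * B₀ (α r) (α t) = -(C r t) * B₀ (α r) (α r) := by
    intro B₀ hinv r t hrt
    have h := hinv (cs.simple r) (α r) (α t)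
    rw [hneg r, hact r t hrt] at h
    simp only [map_neg, map_add, map_smul, LinearMap.neg_apply, LinearMap.add_apply,
      LinearMap.smul_apply, smul_eq_mul] at h
    rw [hC]
    linear_combination -h
  have key2 : ∀ (B₀ : (S → ℂ) →ₗ[ℂ] (S → ℂ) →ₗ[ℂ] ℂ),
      (∀ (w : W) (u v : S → ℂ), B₀ (ρ w u) (ρ w v) = B₀ u v) →
      ∀ r t : S, r ≠ t → 2 * B₀ (α t) (α r) = -(C r t) * B₀ (α r) (α r) := by
    intro B₀ hinv r t hrt
    have h := hinv (cs.simple r) (α t) (α r)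
    rw [hneg r, hact r t hrt] at h
    simp only [map_neg, map_add, map_smul, LinearMap.neg_apply, LinearMap.add_apply,
      LinearMap.smul_apply, smul_eq_mul] at h
    rw [hC]
    linear_combination -h
  -- symmetry on basis vectors
  have symb : ∀ (B₀ : (S → ℂ) →ₗ[ℂ] (S → ℂ) →ₗ[ℂ] ℂ),
      (∀ (w : W) (u v : S → ℂ), B₀ (ρ w u) (ρ w v) = B₀ u v) →
      ∀ r t : S, B₀ (α r) (α t) = B₀ (α t) (α r) := by
    intro B₀ hinv r t
    rcases eq_or_ne r t with rfl | hrt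
    · rfl
    · have h1 := key B₀ hinv r t hrt
      have h2 := key2 B₀ hinv r t hrt
      linear_combination (h1 - h2) / 2
  -- edge relation: the square of the dart factor relates diagonal entries
  have edge : ∀ (B₀ : (S → ℂ) →ₗ[ℂ] (S → ℂ) →ₗ[ℂ] ℂ),
      (∀ (w : W) (u v : S → ℂ), B₀ (ρ w u) (ρ w v) = B₀ u v) →
      ∀ r t : S, Gt.Adj r t →
      (a t r / a r t) ^ 2 * B₀ (α t) (α t) = B₀ (α r) (α r) := by
    intro B₀ hinv r t hadj
    have hrt := ((hGt r t).1 hadj).1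
    have h1 := key B₀ hinv r t hrt
    have h2 := key B₀ hinv t r hrt.symm
    have hs := symb B₀ hinv r t
    -- C r t * B₀ α_r α_r = C t r * B₀ α_t α_t
    have hCC : C r t * B₀ (α r) (α r) = C t r * B₀ (α t) (α t) := by
      linear_combination h1 - h2 - 2 * hs
    rw [hC] at hCC
    simp only [hsym t r, M.symmetric t r] at hCC
    have hcosne := hcos r t hadj
    have har := ha r t
    have hat := ha t r
    have h3 : (a r t / a t r) * B₀ (α r) (α r) = (a t r / a r t) * B₀ (α t) (α t) := by
      have h2c : ((2:ℂ) * ((Real.cos (k r t * Real.pi / (M r t)) : ℝ) : ℂ)) ≠ 0 :=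
        mul_ne_zero two_ne_zero hcosne
      apply mul_left_cancel₀ h2c
      linear_combination hCC
    field_simp at h3 ⊢
    linear_combination -h3
  -- nonvanishing of diagonal entries
  have nd : ∀ (B₀ : (S → ℂ) →ₗ[ℂ] (S → ℂ) →ₗ[ℂ] ℂ),
      (∀ (w : W) (u v : S → ℂ), B₀ (ρ w u) (ρ w v) = B₀ u v) → B₀ ≠ 0 →
      ∀ s : S, B₀ (α s) (α s) ≠ 0 := by
    intro B₀ hinv hne s hzero
    have prop : ∀ {u v : S}, Gt.Walk u v → B₀ (α u) (α u) = 0 → B₀ (α v) (α v) = 0 := by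
      intro u v p
      induction p with
      | nil => exact id
      | @cons u w v hadj p ih =>
        intro h0
        apply ih
        have he := edge B₀ hinv u w hadj
        rw [h0] at he
        have hq : (a w u / a u w) ^ 2 ≠ 0 := pow_ne_zero _ (div_ne_zero (ha w u) (ha u w))
        exact (mul_eq_zero.1 he).resolve_left hq
    have diag0 : ∀ s' : S, B₀ (α s') (α s') = 0 := by
      intro s'
      obtain ⟨p⟩ := hconn.preconnected s s'
      exact prop p hzero
    apply hne
    apply LinearMap.ext_basis (Pi.basisFun ℂ S) (Pi.basisFun ℂ S)
    intro i j
    rw [Pi.basisFun_apply, Pi.basisFun_apply, ← hα, ← hα]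
    simp only [LinearMap.zero_apply]
    rcases eq_or_ne i j with rfl | hij
    · exact diag0 i
    · have hk := key B₀ hinv i j hij
      rw [diag0 i] at hk
      have h0 : (2 : ℂ) * B₀ (α i) (α j) = 0 := by rw [hk]; ring
      exact (mul_eq_zero.1 h0).resolve_left two_ne_zero
  -- telescoping along walks
  have tel : ∀ {u v : S} (p : Gt.Walk u v),
      ((p.darts.map fun d => a d.toProd.2 d.toProd.1 / a d.toProd.1 d.toProd.2).prod) ^ 2
        * B (α v) (α v) = B (α u) (α u) := by
    intro u v p
    induction p with
    | nil => simp
    | @cons u w v hadj p ih =>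
      simp only [SimpleGraph.Walk.darts_cons, List.map_cons, List.prod_cons, mul_pow]
      have he := edge B hBinv u w hadj
      rw [mul_assoc, ih]
      exact he
  have chi : ∀ (u : S) (p : Gt.Walk u u),
      (p.darts.map fun d => a d.toProd.2 d.toProd.1 / a d.toProd.1 d.toProd.2).prod = 1 ∨
      (p.darts.map fun d => a d.toProd.2 d.toProd.1 / a d.toProd.1 d.toProd.2).prod = -1 := by
    intro u p
    have h := tel p
    have hb := nd B hBinv hBne u
    have hsq : ((p.darts.map fun d =>
        a d.toProd.2 d.toProd.1 / a d.toProd.1 d.toProd.2).prod) ^ 2 = 1 :=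
      mul_right_cancel₀ hb (by rw [h, one_mul])
    rw [sq] at hsq
    exact mul_self_eq_one_iff.1 hsq
  have hBsymm : ∀ u v : S → ℂ, B u v = B v u := by
    have hflip : B = B.flip := by
      apply LinearMap.ext_basis (Pi.basisFun ℂ S) (Pi.basisFun ℂ S)
      intro i j
      rw [Pi.basisFun_apply, Pi.basisFun_apply, ← hα, ← hα, LinearMap.flip_apply]
      exact symb B hBinv i j
    intro u v
    conv_lhs => rw [hflip]
    exact LinearMap.flip_apply B v u
  refine ⟨chi, hBsymm, nd B hBinv hBne, ?_⟩
  intro B' hinv'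
  rcases eq_or_ne B' 0 with rfl | hne'
  · exact ⟨0, by simp⟩
  have hNE : Nonempty S := by
    by_contra h
    exact hne' (LinearMap.ext_basis (Pi.basisFun ℂ S) (Pi.basisFun ℂ S)
      fun i _ => (h ⟨i⟩).elim)
  obtain ⟨s0⟩ := hNE
  set c : ℂ := B' (α s0) (α s0) / B (α s0) (α s0) with hc
  have ndB := nd B hBinv hBne
  have diagc : ∀ s : S, B' (α s) (α s) = c * B (α s) (α s) := by
    have prop : ∀ {u v : S}, Gt.Walk u v →
        B' (α u) (α u) = c * B (α u) (α u) → B' (α v) (α v) = c * B (α v) (α v) := by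
      intro u v p
      induction p with
      | nil => exact id
      | @cons u w v hadj p ih =>
        intro h0
        apply ih
        have e1 := edge B hBinv u w hadj
        have e2 := edge B' hinv' u w hadj
        have hq : (a w u / a u w) ^ 2 ≠ 0 := pow_ne_zero _ (div_ne_zero (ha w u) (ha u w))
        apply mul_left_cancel₀ hq
        rw [e2, h0, ← e1]
        ring
    intro s
    obtain ⟨p⟩ := hconn.preconnected s0 s
    refine prop p ?_
    rw [hc, div_mul_cancel₀ _ (ndB s0)]
  refine ⟨c, ?_⟩
  apply LinearMap.ext_basis (Pi.basisFun ℂ S) (Pi.basisFun ℂ S)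
  intro i j
  rw [Pi.basisFun_apply, Pi.basisFun_apply, ← hα, ← hα,
    LinearMap.smul_apply, LinearMap.smul_apply, smul_eq_mul]
  rcases eq_or_ne i j with rfl | hij
  · exact diagc i
  · have h1 := key B' hinv' i j hij
    have h2 := key B hBinv i j hij
    have hd := diagc i
    linear_combination h1 / 2 - c / 2 * h2 - C i j / 2 * hd
end

section
/- Let V = ⊕_{s∈S} ℂα_s be an IR-representation of (W,S) (all m_{rt} < ∞) with connected G̃, let V₀ be the subspace of W-fixed vectors. Then every subrepresentation of V is contained in V₀, the quotient V/V₀ is an irreducible representation of W, and V is indecomposable as a W-representation. -/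
/-- For an IR-representation `V = ⊕ ℂα_s` with connected associated graph `G̃`, with
`V₀` the subspace of `W`-fixed vectors: every proper subrepresentation is contained in
`V₀`, the quotient `V/V₀` is irreducible, and `V` is indecomposable. -/
theorem ir_rep_structure_connected {S : Type*} [Fintype S] [DecidableEq S]
    {W : Type*} [Group W] (M : CoxeterMatrix S) (cs : CoxeterSystem M W)
    (hfin : ∀ r t : S, M r t ≠ 0)
    (k : S → S → ℕ) (hsym : ∀ r t, k r t = k t r)
    (hk1 : ∀ r t : S, r ≠ t → 1 ≤ k r t) (hk2 : ∀ r t : S, r ≠ t → 2 * k r t ≤ M r t)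
    (a : S → S → ℂ) (ha : ∀ r t, a r t ≠ 0)
    (α : S → (S → ℂ)) (hα : ∀ s, α s = Pi.single s 1)
    (ρ : Representation ℂ W (S → ℂ))
    (hneg : ∀ r : S, ρ (cs.simple r) (α r) = -α r)
    (hact : ∀ r t : S, r ≠ t → ρ (cs.simple r) (α t) =
      α t + (2 * (a r t / a t r) *
        ((Real.cos (k r t * Real.pi / (M r t)) : ℝ) : ℂ)) • α r)
    (Gt : SimpleGraph S)
    (hGt : ∀ r t : S, Gt.Adj r t ↔ r ≠ t ∧ 2 * k r t ≠ M r t)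
    (hconn : Gt.Connected)
    (V₀ : Submodule ℂ (S → ℂ))
    (hV₀ : V₀ = {v : S → ℂ | ∀ w : W, ρ w v = v}) :
    -- V₀ is proper and every proper subrepresentation is contained in V₀
    V₀ ≠ ⊤ ∧
    (∀ p : Submodule ℂ (S → ℂ), (∀ w : W, ∀ v ∈ p, ρ w v ∈ p) → p ≠ ⊤ → p ≤ V₀) ∧
    -- the quotient V/V₀ is irreducible: no invariant submodule strictly between V₀ and ⊤
    (∀ p : Submodule ℂ (S → ℂ), (∀ w : W, ∀ v ∈ p, ρ w v ∈ p) → V₀ ≤ p →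
      p = V₀ ∨ p = ⊤) ∧
    -- V is indecomposable
    ¬ ∃ p q : Submodule ℂ (S → ℂ),
        (∀ w : W, ∀ v ∈ p, ρ w v ∈ p) ∧ (∀ w : W, ∀ v ∈ q, ρ w v ∈ q) ∧
        p ≠ ⊥ ∧ q ≠ ⊥ ∧ IsCompl p q := by
  classical
  obtain ⟨s₀⟩ := hconn.nonempty
  have hmem : ∀ v : S → ℂ, v ∈ V₀ ↔ ∀ w : W, ρ w v = v := by
    intro v
    rw [← SetLike.mem_coe, hV₀]
    rfl
  have hα_ne : ∀ s, α s ≠ (0 : S → ℂ) := by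
    intro s h
    rw [hα] at h
    simpa using congrFun h s
  have hsum : ∀ v : S → ℂ, ∑ t, v t • α t = v := by
    intro v
    ext x
    simp [hα, Finset.sum_apply, Pi.single_apply]
  -- nonvanishing of the coefficients along edges
  have hc_ne : ∀ r t : S, Gt.Adj r t →
      (2 * (a r t / a t r) * ((Real.cos (k r t * Real.pi / (M r t)) : ℝ) : ℂ)) ≠ 0 := by
    intro r t hadj
    obtain ⟨hne, hk⟩ := (hGt r t).mp hadj
    have hm : (0:ℝ) < (M r t : ℝ) := by
      exact_mod_cast Nat.pos_of_ne_zero (hfin r t)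
    have h1 : (1:ℝ) ≤ (k r t : ℝ) := by exact_mod_cast hk1 r t hne
    have h2 : 2 * (k r t : ℝ) < (M r t : ℝ) := by
      exact_mod_cast lt_of_le_of_ne (hk2 r t hne) hk
    have hpi := Real.pi_pos
    have hx0 : 0 < (k r t : ℝ) * Real.pi / (M r t : ℝ) := by positivity
    have hx1 : (k r t : ℝ) * Real.pi / (M r t : ℝ) < Real.pi / 2 := by
      rw [div_lt_div_iff₀ hm two_pos]
      nlinarith
    have hcos : Real.cos ((k r t : ℝ) * Real.pi / (M r t : ℝ)) ≠ 0 :=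
      ne_of_gt (Real.cos_pos_of_mem_Ioo ⟨by linarith, hx1⟩)
    exact mul_ne_zero (mul_ne_zero two_ne_zero (div_ne_zero (ha r t) (ha t r)))
      (Complex.ofReal_ne_zero.mpr hcos)
  -- if a submodule contains all the α's, it is everything
  have htop : ∀ p : Submodule ℂ (S → ℂ), (∀ t, α t ∈ p) → p = ⊤ := by
    intro p hp
    rw [eq_top_iff]
    intro v _
    rw [← hsum v]
    exact Submodule.sum_mem _ fun t _ => Submodule.smul_mem _ _ (hp t)
  -- propagation along an edge
  have hstep : ∀ p : Submodule ℂ (S → ℂ), (∀ w : W, ∀ v ∈ p, ρ w v ∈ p) →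
      ∀ r t, Gt.Adj r t → α r ∈ p → α t ∈ p := by
    intro p hinv r t hadj hr
    have htr : t ≠ r := (Gt.ne_of_adj hadj).symm
    have h1 := hinv (cs.simple t) _ hr
    rw [hact t r htr] at h1
    set c := 2 * (a t r / a r t) * ((Real.cos (k t r * Real.pi / (M t r)) : ℝ) : ℂ) with hcdef
    have h2 : c • α t ∈ p := by
      have := p.sub_mem h1 hr
      simpa using this
    have hc : c ≠ 0 := hc_ne t r hadj.symm
    have := p.smul_mem c⁻¹ h2
    rwa [smul_smul, inv_mul_cancel₀ hc, one_smul] at this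
  -- propagation along walks + connectivity
  have hall : ∀ p : Submodule ℂ (S → ℂ), (∀ w : W, ∀ v ∈ p, ρ w v ∈ p) →
      (∃ s, α s ∈ p) → p = ⊤ := by
    intro p hinv ⟨s, hs⟩
    apply htop
    have key : ∀ {u v : S}, Gt.Walk u v → α u ∈ p → α v ∈ p := by
      intro u v wlk
      induction wlk with
      | nil => exact id
      | cons h _ ih => exact fun hu => ih (hstep p hinv _ _ h hu)
    intro t
    obtain ⟨wlk⟩ := hconn.preconnected s t
    exact key wlk hs
  -- the key computation: ρ(s) v - v is a multiple of α s
  have lemA : ∀ (s : S) (v : S → ℂ), ∃ c : ℂ, ρ (cs.simple s) v = v + c • α s := by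
    intro s v
    have hLt : ∀ t, ∃ c : ℂ, ρ (cs.simple s) (α t) = α t + c • α s := by
      intro t
      by_cases ht : t = s
      · subst ht
        exact ⟨-2, by rw [hneg]; module⟩
      · exact ⟨_, hact s t (Ne.symm ht)⟩
    choose c hc using hLt
    refine ⟨∑ t, v t * c t, ?_⟩
    have h1 : ρ (cs.simple s) v = ∑ t, v t • ρ (cs.simple s) (α t) := by
      conv_lhs => rw [← hsum v]
      rw [map_sum]
      simp [map_smul]
    rw [h1]
    simp_rw [hc, smul_add, Finset.sum_add_distrib, hsum, smul_smul, ← Finset.sum_smul]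
  -- a proper invariant submodule is pointwise fixed
  have hfix : ∀ p : Submodule ℂ (S → ℂ), (∀ w : W, ∀ v ∈ p, ρ w v ∈ p) → p ≠ ⊤ →
      ∀ v ∈ p, ∀ w : W, ρ w v = v := by
    intro p hinv hne v hv w
    have hsimple : ∀ s : S, ρ (cs.simple s) v = v := by
      intro s
      obtain ⟨c, hc⟩ := lemA s v
      by_cases hc0 : c = 0
      · simp [hc, hc0]
      · exfalso
        apply hne
        apply hall p hinv
        refine ⟨s, ?_⟩
        have h2 : c • α s ∈ p := by
          have := p.sub_mem (hinv (cs.simple s) v hv) hv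
          rw [hc] at this
          simpa using this
        have := p.smul_mem c⁻¹ h2
        rwa [smul_smul, inv_mul_cancel₀ hc0, one_smul] at this
    refine cs.simple_induction (p := fun w => ρ w v = v) w hsimple (by simp) ?_
    intro w₁ w₂ h₁ h₂
    show ρ (w₁ * w₂) v = v
    rw [map_mul]
    simp only [Module.End.mul_apply]
    rw [h₂, h₁]
  -- V₀ is proper
  have hV₀top : V₀ ≠ ⊤ := by
    intro h
    have hs : α s₀ ∈ V₀ := h ▸ Submodule.mem_top
    have := (hmem (α s₀)).mp hs (cs.simple s₀)
    rw [hneg s₀] at this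
    have h2 : α s₀ + α s₀ = 0 := by nth_rewrite 1 [← this]; abel
    have h3 : (2 : ℂ) • α s₀ = 0 := by rw [two_smul]; exact h2
    rcases smul_eq_zero.mp h3 with h | h
    · norm_num at h
    · exact hα_ne s₀ h
  have part2 : ∀ p : Submodule ℂ (S → ℂ), (∀ w : W, ∀ v ∈ p, ρ w v ∈ p) → p ≠ ⊤ → p ≤ V₀ := by
    intro p hinv hne v hv
    exact (hmem v).mpr (hfix p hinv hne v hv)
  refine ⟨hV₀top, part2, ?_, ?_⟩
  · intro p hinv hle
    by_cases h : p = ⊤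
    · exact Or.inr h
    · exact Or.inl (le_antisymm (part2 p hinv h) hle)
  · rintro ⟨p, q, hpinv, hqinv, hp0, hq0, hcompl⟩
    have hpne : p ≠ ⊤ := by
      intro h
      subst h
      exact hq0 (hcompl.symm.disjoint.eq_bot_of_le le_top)
    have hqne : q ≠ ⊤ := by
      intro h
      subst h
      exact hp0 (hcompl.disjoint.eq_bot_of_le le_top)
    have := sup_le (part2 p hpinv hpne) (part2 q hqinv hqne)
    rw [hcompl.sup_eq_top] at this
    exact hV₀top (top_le_iff.mp this)
end
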